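/- arXiv:2110.13645 — 10 statements merged into one kernel-verified Lean document; each statement's English description precedes it below -/
import Mathlib

section
/- For every n ≡ 2 (mod 4) with n > 2, the shuffle-cube SQ_n is not bipartite. -/
/-- The `i`-th bit of a binary string of length `n` (junk value `false` out of range). -/
def bitOf {n : ℕ} (u : Fin n → Bool) (i : ℕ) : Bool :=
  if h : i < n then u ⟨i, h⟩ else false

/-- Membership of the 4-tuple `x3x2x1x0` in the set `V_{ab}`, where
`V_{00} = {1111,0001,0010,0011}`, `V_{01} = {0100,0101,0110,0111}`,
`V_{10} = {1000,1001,1010,1011}`, `V_{11} = {1100,1101,1110,1111}`. -/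
def inV (a b x3 x2 x1 x0 : Bool) : Prop :=
  (x3, x2, x1, x0) ∈ (match a, b with
    | false, false => [(true,true,true,true),(false,false,false,true),
        (false,false,true,false),(false,false,true,true)]
    | false, true  => [(false,true,false,false),(false,true,false,true),
        (false,true,true,false),(false,true,true,true)]
    | true, false  => [(true,false,false,false),(true,false,false,true),
        (true,false,true,false),(true,false,true,true)]
    | true, true   => [(true,true,false,false),(true,true,false,true),
        (true,true,true,false),(true,true,true,true)])

/-- `u` and `v` agree in all bits except in exactly one of the two bits `u_1, u_0`. -/
def lowRel {n : ℕ} (u v : Fin n → Bool) : Prop :=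
  ∃ i < 2, bitOf u i ≠ bitOf v i ∧ ∀ k, k ≠ i → bitOf u k = bitOf v k

/-- `u` and `v` agree in all bits outside the `j`-th 4-bit block
`u_{4j+1} u_{4j} u_{4j-1} u_{4j-2}`. -/
def blockAgree {n : ℕ} (u v : Fin n → Bool) (j : ℕ) : Prop :=
  ∀ k, (k < 4*j - 2 ∨ 4*j + 1 < k) → bitOf u k = bitOf v k

/-- The shuffle-cube relation: condition (i) or condition (ii). -/
def sqRel {n : ℕ} (u v : Fin n → Bool) : Prop :=
  lowRel u v ∨ ∃ j, 1 ≤ j ∧ j ≤ (n-2)/4 ∧ blockAgree u v j ∧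
    inV (bitOf u 1) (bitOf u 0)
      (xor (bitOf u (4*j+1)) (bitOf v (4*j+1)))
      (xor (bitOf u (4*j))   (bitOf v (4*j)))
      (xor (bitOf u (4*j-1)) (bitOf v (4*j-1)))
      (xor (bitOf u (4*j-2)) (bitOf v (4*j-2)))

/-- The `n`-dimensional shuffle-cube `SQ_n`. -/
def SQ (n : ℕ) : SimpleGraph (Fin n → Bool) := SimpleGraph.fromRel sqRel

/-- For every `n ≡ 2 (mod 4)` with `n > 2`, the shuffle-cube `SQ_n`
is not bipartite (i.e. not 2-colorable). -/
theorem SQ_not_bipartite (n : ℕ) (hn : n % 4 = 2) (hn2 : 2 < n) :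
    ¬ (SQ n).Colorable 2 := by
  have h6 : 6 ≤ n := by omega
  set a : Fin n → Bool := fun _ => false with ha
  set b : Fin n → Bool := fun i => decide (i.val = 2) with hb
  set c : Fin n → Bool := fun i => decide (i.val = 2 ∨ i.val = 3) with hc
  have hj : 1 ≤ (n-2)/4 := by omega
  have hba : ∀ k (h : k < n), bitOf a k = false := by
    intro k h; simp [bitOf, h, ha]
  have hbb : ∀ k (h : k < n), bitOf b k = decide (k = 2) := by
    intro k h; simp [bitOf, h, hb]
  have hbc' : ∀ k (h : k < n), bitOf c k = decide (k = 2 ∨ k = 3) := by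
    intro k h; simp [bitOf, h, hc]
  have key : ∀ u v : Fin n → Bool,
      (∀ k, k < 2 ∨ 5 < k → bitOf u k = bitOf v k) →
      bitOf u 1 = false → bitOf u 0 = false →
      inV false false (xor (bitOf u 5) (bitOf v 5)) (xor (bitOf u 4) (bitOf v 4))
        (xor (bitOf u 3) (bitOf v 3)) (xor (bitOf u 2) (bitOf v 2)) →
      sqRel u v := by
    intro u v hag h1 h0 hV
    right
    refine ⟨1, le_refl 1, hj, ?_, ?_⟩
    · intro k hk
      exact hag k (by omega)
    · simpa [h1, h0] using hV
  have oob : ∀ (u : Fin n → Bool) k, ¬ k < n → bitOf u k = false := by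
    intro u k h; simp [bitOf, h]
  have hab : (SQ n).Adj a b := by
    rw [SQ, SimpleGraph.fromRel_adj]
    refine ⟨?_, Or.inl ?_⟩
    · intro h
      have := congrFun h ⟨2, by omega⟩
      simp [ha, hb] at this
    · apply key
      · intro k hk
        by_cases h : k < n
        · rw [hba k h, hbb k h]; simp; omega
        · rw [oob a k h, oob b k h]
      · rw [hba 1 (by omega)]
      · rw [hba 0 (by omega)]
      · rw [hba 2 (by omega), hba 3 (by omega), hba 4 (by omega), hba 5 (by omega),
          hbb 2 (by omega), hbb 3 (by omega), hbb 4 (by omega), hbb 5 (by omega)]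
        simp [inV]
  have hac : (SQ n).Adj a c := by
    rw [SQ, SimpleGraph.fromRel_adj]
    refine ⟨?_, Or.inl ?_⟩
    · intro h
      have := congrFun h ⟨2, by omega⟩
      simp [ha, hc] at this
    · apply key
      · intro k hk
        by_cases h : k < n
        · rw [hba k h, hbc' k h]; simp; omega
        · rw [oob a k h, oob c k h]
      · rw [hba 1 (by omega)]
      · rw [hba 0 (by omega)]
      · rw [hba 2 (by omega), hba 3 (by omega), hba 4 (by omega), hba 5 (by omega),
          hbc' 2 (by omega), hbc' 3 (by omega), hbc' 4 (by omega), hbc' 5 (by omega)]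
        simp [inV]
  have hbc2 : (SQ n).Adj b c := by
    rw [SQ, SimpleGraph.fromRel_adj]
    refine ⟨?_, Or.inl ?_⟩
    · intro h
      have := congrFun h ⟨3, by omega⟩
      simp [hb, hc] at this
    · apply key
      · intro k hk
        by_cases h : k < n
        · rw [hbb k h, hbc' k h]; simp; omega
        · rw [oob b k h, oob c k h]
      · rw [hbb 1 (by omega)]; decide
      · rw [hbb 0 (by omega)]; decide
      · rw [hbb 2 (by omega), hbb 3 (by omega), hbb 4 (by omega), hbb 5 (by omega),
          hbc' 2 (by omega), hbc' 3 (by omega), hbc' 4 (by omega), hbc' 5 (by omega)]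
        simp [inV]
  rintro ⟨C⟩
  have e1 : (C a).val ≠ (C b).val := fun h => C.valid hab (Fin.ext h)
  have e2 : (C a).val ≠ (C c).val := fun h => C.valid hac (Fin.ext h)
  have e3 : (C b).val ≠ (C c).val := fun h => C.valid hbc2 (Fin.ext h)
  have := (C a).isLt
  have := (C b).isLt
  have := (C c).isLt
  omega
end

section
/- For every n ≡ 2 (mod 4) with n > 2, the girth of the shuffle-cube SQ_n equals 3, i.e., SQ_n contains a triangle and no shorter cycle. -/
/-- For every `n ≡ 2 (mod 4)` with `n > 2`, the girth of the shuffle-cube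
`SQ_n` equals 3. -/
theorem SQ_girth_eq_three (n : ℕ) (hn : n % 4 = 2) (hn2 : 2 < n) :
    (SQ n).girth = 3 := by
  have h6 : 6 ≤ n := by omega
  set a : Fin n → Bool := fun _ => false with ha
  set b : Fin n → Bool := fun k => decide (k.val = 2) with hb
  set c : Fin n → Bool := fun k => decide (k.val = 2 ∨ k.val = 3) with hc
  have hA : ∀ i, bitOf a i = false := by intro i; simp [bitOf, ha]
  have hB : ∀ i, bitOf b i = decide (i = 2) := by
    intro i
    by_cases hi : i < n
    · simp [bitOf, hi, hb]
    · have : i ≠ 2 := by omega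
      simp [bitOf, hi, this]
  have hC : ∀ i, bitOf c i = decide (i = 2 ∨ i = 3) := by
    intro i
    by_cases hi : i < n
    · simp [bitOf, hi, hc]
    · have h2 : i ≠ 2 := by omega
      have h3 : i ≠ 3 := by omega
      simp [bitOf, hi, h2, h3]
  have hj : 1 ≤ (n-2)/4 := by omega
  have hab : sqRel a b := by
    refine Or.inr ⟨1, le_refl 1, hj, ?_, ?_⟩
    · intro k hk; rw [hA, hB]
      have : k ≠ 2 := by omega
      simp [this]
    · rw [hA, hA, hA, hB, hA, hB, hA, hB, hA, hB]; simp [inV]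
  have hac : sqRel a c := by
    refine Or.inr ⟨1, le_refl 1, hj, ?_, ?_⟩
    · intro k hk; rw [hA, hC]
      have h2 : k ≠ 2 := by omega
      have h3 : k ≠ 3 := by omega
      simp [h2, h3]
    · rw [hA, hA, hA, hC, hA, hC, hA, hC, hA, hC]; simp [inV]
  have hbc : sqRel b c := by
    refine Or.inr ⟨1, le_refl 1, hj, ?_, ?_⟩
    · intro k hk; rw [hB, hC]
      have h2 : k ≠ 2 := by omega
      have h3 : k ≠ 3 := by omega
      simp [h2, h3]
    · rw [hB, hB, hB, hC, hB, hC, hB, hC, hB, hC]; simp [inV]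
  have hab' : a ≠ b := by
    intro h
    have := congrFun h ⟨2, by omega⟩
    simp [ha, hb] at this
  have hac' : a ≠ c := by
    intro h
    have := congrFun h ⟨2, by omega⟩
    simp [ha, hc] at this
  have hbc' : b ≠ c := by
    intro h
    have := congrFun h ⟨3, by omega⟩
    simp [hb, hc] at this
  have hAB : (SQ n).Adj a b := by
    rw [SQ, SimpleGraph.fromRel_adj]; exact ⟨hab', Or.inl hab⟩
  have hBC : (SQ n).Adj b c := by
    rw [SQ, SimpleGraph.fromRel_adj]; exact ⟨hbc', Or.inl hbc⟩
  have hCA : (SQ n).Adj c a := by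
    rw [SQ, SimpleGraph.fromRel_adj]; exact ⟨hac'.symm, Or.inr hac⟩
  let w : (SQ n).Walk a a :=
    SimpleGraph.Walk.cons hAB (SimpleGraph.Walk.cons hBC (SimpleGraph.Walk.cons hCA SimpleGraph.Walk.nil))
  have hcyc : w.IsCycle := by
    rw [SimpleGraph.Walk.cons_isCycle_iff]
    constructor
    · simp [SimpleGraph.Walk.isPath_def, hbc', hab'.symm, hac'.symm]
    · simp [Sym2.eq, Sym2.rel_iff', hab', hbc', hac', hab'.symm, hbc'.symm, hac'.symm]
  have hlen : w.length = 3 := rfl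
  have hle : (SQ n).egirth ≤ 3 := by
    have h : (SQ n).egirth ≤ (w.length : ℕ∞) := by
      rw [SimpleGraph.egirth]
      apply iInf_le_of_le a
      apply iInf_le_of_le w
      exact iInf_le _ hcyc
    rw [hlen] at h
    exact_mod_cast h
  have hge : 3 ≤ (SQ n).egirth := SimpleGraph.three_le_egirth
  have heg : (SQ n).egirth = 3 := le_antisymm hle hge
  rw [SimpleGraph.girth, heg]
  rfl
end

section
/- Let n ≡ 2 (mod 4) with n > 2. A vertex u = u_{n-1}⋯u_1u_0 of the shuffle-cube SQ_n is contained in a clique of size four if and only if u_1u_0 = 00. -/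
instance inV_decidable (a b x3 x2 x1 x0 : Bool) : Decidable (inV a b x3 x2 x1 x0) := by
  unfold inV; infer_instance

-- helper lemmas test
lemma inV_dec : ∀ a b x3 x2 x1 x0 : Bool, ¬(a = false ∧ b = false) →
    inV a b x3 x2 x1 x0 → x3 = a ∧ x2 = b := by decide

lemma bool_xor3 : ∀ p q r a : Bool, xor p q = a → xor p r = a → xor q r = a → a = false := by decide

lemma bool_xor_ne : ∀ x y : Bool, xor x y = true → x ≠ y := by decide

lemma bool_ne_ne : ∀ x y z : Bool, x ≠ z → y ≠ z → x = y := by decide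

lemma inV_con : ∀ c2 c3 c2' c3' : Bool, ¬(c2 = c2' ∧ c3 = c3') →
    inV false false false false (xor c3 c3') (xor c2 c2') := by decide

lemma bitOf_ext {n : ℕ} {u v : Fin n → Bool} (h : ∀ k, bitOf u k = bitOf v k) : u = v := by
  funext x
  have := h x.val
  simpa [bitOf, x.isLt] using this

lemma not_lowRel_of_eq {n : ℕ} {u v : Fin n → Bool}
    (h1 : bitOf u 1 = bitOf v 1) (h0 : bitOf u 0 = bitOf v 0) : ¬ lowRel u v := by
  rintro ⟨i, hi, hne, -⟩
  interval_cases i <;> simp_all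

lemma lowRel_symm {n : ℕ} {u v : Fin n → Bool} (h : lowRel u v) : lowRel v u := by
  obtain ⟨i, hi, hne, hag⟩ := h
  exact ⟨i, hi, hne.symm, fun k hk => (hag k hk).symm⟩

lemma blockAgree_low {n : ℕ} {u v : Fin n → Bool} {j : ℕ} (hj : 1 ≤ j) (h : blockAgree u v j) :
    bitOf u 1 = bitOf v 1 ∧ bitOf u 0 = bitOf v 0 :=
  ⟨h 1 (Or.inl (by omega)), h 0 (Or.inl (by omega))⟩

lemma adj_block {n : ℕ} {v w : Fin n → Bool} (h : (SQ n).Adj v w)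
    (h1 : bitOf v 1 = bitOf w 1) (h0 : bitOf v 0 = bitOf w 0) :
    ∃ j, 1 ≤ j ∧ blockAgree v w j ∧
      inV (bitOf v 1) (bitOf v 0)
        (xor (bitOf v (4*j+1)) (bitOf w (4*j+1)))
        (xor (bitOf v (4*j)) (bitOf w (4*j)))
        (xor (bitOf v (4*j-1)) (bitOf w (4*j-1)))
        (xor (bitOf v (4*j-2)) (bitOf w (4*j-2))) := by
  rw [SQ, SimpleGraph.fromRel_adj] at h
  obtain ⟨hne, h'⟩ := h
  rcases h' with (hlow | ⟨j, hj1, -, hag, hV⟩) | (hlow | ⟨j, hj1, -, hag, hV⟩)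
  · exact absurd hlow (not_lowRel_of_eq h1 h0)
  · exact ⟨j, hj1, hag, hV⟩
  · exact absurd (lowRel_symm hlow) (not_lowRel_of_eq h1 h0)
  · refine ⟨j, hj1, fun k hk => (hag k hk).symm, ?_⟩
    rw [h1, h0]
    simpa [Bool.xor_comm] using hV
/-- Flip bit 2 by `c2` and bit 3 by `c3`. -/
def vtx {n : ℕ} (u : Fin n → Bool) (c2 c3 : Bool) : Fin n → Bool :=
  fun i => if (i : ℕ) = 2 then xor c2 (u i) else if (i : ℕ) = 3 then xor c3 (u i) else u i

lemma bitOf_vtx {n : ℕ} (hn : 6 ≤ n) (u : Fin n → Bool) (c2 c3 : Bool) (k : ℕ) :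
    bitOf (vtx u c2 c3) k =
      if k = 2 then xor c2 (bitOf u 2) else if k = 3 then xor c3 (bitOf u 3) else bitOf u k := by
  unfold bitOf vtx
  by_cases hk : k < n
  · rw [dif_pos hk, dif_pos (show 2 < n by omega), dif_pos (show 3 < n by omega)]
    by_cases h2 : k = 2
    · subst h2; simp
    · by_cases h3 : k = 3
      · subst h3; simp
      · simp [h2, h3, hk]
  · rw [dif_neg hk, dif_neg hk, if_neg (by omega), if_neg (by omega)]

lemma vtx_inj {n : ℕ} (hn : 6 ≤ n) (u : Fin n → Bool) {c2 c3 c2' c3' : Bool}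
    (h : vtx u c2 c3 = vtx u c2' c3') : c2 = c2' ∧ c3 = c3' := by
  have h2 := congrArg (fun v => bitOf v 2) h
  have h3 := congrArg (fun v => bitOf v 3) h
  simp only [bitOf_vtx hn] at h2 h3
  simp at h2 h3
  constructor
  · rcases c2 <;> rcases c2' <;> simp_all
  · rcases c3 <;> rcases c3' <;> simp_all

lemma vtx_adj {n : ℕ} (hn4 : n % 4 = 2) (hn : 6 ≤ n) (u : Fin n → Bool)
    (h1 : bitOf u 1 = false) (h0 : bitOf u 0 = false) {c2 c3 c2' c3' : Bool}
    (hne : ¬(c2 = c2' ∧ c3 = c3')) : (SQ n).Adj (vtx u c2 c3) (vtx u c2' c3') := by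
  rw [SQ, SimpleGraph.fromRel_adj]
  constructor
  · intro h; exact hne (vtx_inj hn u h)
  · left
    right
    refine ⟨1, le_refl 1, by omega, ?_, ?_⟩
    · intro k hk
      rw [bitOf_vtx hn, bitOf_vtx hn, if_neg (by omega), if_neg (by omega),
        if_neg (by omega), if_neg (by omega)]
    · have e1 : bitOf (vtx u c2 c3) 1 = bitOf u 1 := by
        rw [bitOf_vtx hn]; norm_num
      have e0 : bitOf (vtx u c2 c3) 0 = bitOf u 0 := by
        rw [bitOf_vtx hn]; norm_num
      rw [e1, e0, h1, h0]
      simp only [bitOf_vtx hn]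
      norm_num
      simpa [Bool.xor_comm, Bool.xor_assoc, Bool.xor_left_comm] using inV_con c2 c3 c2' c3' hne
lemma vtx_self {n : ℕ} (u : Fin n → Bool) : vtx u false false = u := by
  funext i
  simp [vtx]

lemma construct {n : ℕ} (hn4 : n % 4 = 2) (hn : 6 ≤ n) (u : Fin n → Bool)
    (h1 : bitOf u 1 = false) (h0 : bitOf u 0 = false) :
    ∃ s : Finset (Fin n → Bool), (SQ n).IsNClique 4 s ∧ u ∈ s := by
  classical
  have hne : ∀ c2 c3 c2' c3' : Bool, ¬(c2 = c2' ∧ c3 = c3') →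
      vtx u c2 c3 ≠ vtx u c2' c3' := fun _ _ _ _ h hh => h (vtx_inj hn u hh)
  have d1 := hne false false true false (by simp)
  have d2 := hne false false false true (by simp)
  have d3 := hne false false true true (by simp)
  have d4 := hne true false false true (by simp)
  have d5 := hne true false true true (by simp)
  have d6 := hne false true true true (by simp)
  refine ⟨{vtx u false false, vtx u true false, vtx u false true, vtx u true true}, ⟨?_, ?_⟩, ?_⟩
  · intro x hx y hy hxy
    simp only [Finset.coe_insert, Set.mem_insert_iff, Finset.coe_singleton,
      Set.mem_singleton_iff] at hx hy
    rcases hx with rfl | rfl | rfl | rfl <;> rcases hy with rfl | rfl | rfl | rfl <;>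
      first
        | exact absurd rfl hxy
        | exact vtx_adj hn4 hn u h1 h0 (by simp)
  · rw [Finset.card_insert_of_notMem (by simp [d1, d2, d3]),
      Finset.card_insert_of_notMem (by simp [d4, d5]),
      Finset.card_insert_of_notMem (by simp [d6]), Finset.card_singleton]
  · exact Finset.mem_insert.mpr (Or.inl (vtx_self u).symm)
lemma no_three {n : ℕ} {u w1 w2 : Fin n → Bool}
    (hab : ¬(bitOf u 1 = false ∧ bitOf u 0 = false))
    (e11 : bitOf w1 1 = bitOf u 1) (e10 : bitOf w1 0 = bitOf u 0)
    (e21 : bitOf w2 1 = bitOf u 1) (e20 : bitOf w2 0 = bitOf u 0)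
    (hne12 : w1 ≠ w2)
    (a1 : (SQ n).Adj u w1) (a2 : (SQ n).Adj u w2) (a3 : (SQ n).Adj w1 w2) : False := by
  obtain ⟨j1, hj1, hag1, hV1⟩ := adj_block a1 e11.symm e10.symm
  obtain ⟨j2, hj2, hag2, hV2⟩ := adj_block a2 e21.symm e20.symm
  obtain ⟨j3, hj3, hag3, hV3⟩ := adj_block a3 (e11.trans e21.symm) (e10.trans e20.symm)
  rw [e11, e10] at hV3
  obtain ⟨t1a, t1b⟩ := inV_dec _ _ _ _ _ _ hab hV1
  obtain ⟨t2a, t2b⟩ := inV_dec _ _ _ _ _ _ hab hV2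
  obtain ⟨t3a, t3b⟩ := inV_dec _ _ _ _ _ _ hab hV3
  by_cases hjj : j1 = j2
  · subst hjj
    by_cases hj31 : j3 = j1
    · subst hj31
      exact hab ⟨bool_xor3 _ _ _ _ t1a t2a t3a, bool_xor3 _ _ _ _ t1b t2b t3b⟩
    · apply hne12
      apply bitOf_ext
      intro k
      by_cases hk : k < 4*j1 - 2 ∨ 4*j1 + 1 < k
      · exact (hag1 k hk).symm.trans (hag2 k hk)
      · exact hag3 k (by omega)
  · have hex : ∀ (w : Fin n → Bool) (j : ℕ),
        xor (bitOf u (4*j+1)) (bitOf w (4*j+1)) = bitOf u 1 →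
        xor (bitOf u (4*j)) (bitOf w (4*j)) = bitOf u 0 →
        ∃ p, 4*j - 2 ≤ p ∧ p ≤ 4*j+1 ∧ bitOf u p ≠ bitOf w p := by
      intro w j ha hb
      cases h1 : bitOf u 1 with
      | true => exact ⟨4*j+1, by omega, by omega, bool_xor_ne _ _ (by rw [ha, h1])⟩
      | false =>
        cases h0 : bitOf u 0 with
        | true => exact ⟨4*j, by omega, by omega, bool_xor_ne _ _ (by rw [hb, h0])⟩
        | false => exact absurd ⟨h1, h0⟩ hab
    obtain ⟨p, hp1, hp2, hup⟩ := hex w1 j1 t1a t1b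
    obtain ⟨q, hq1, hq2, huq⟩ := hex w2 j2 t2a t2b
    have hpw : bitOf w1 p ≠ bitOf w2 p := by
      have h := hag2 p (by omega)
      exact fun hh => hup (h.trans hh.symm)
    have hqw : bitOf w1 q ≠ bitOf w2 q := by
      have h := hag1 q (by omega)
      exact fun hh => huq (h.trans hh)
    have h3p : ¬ (p < 4*j3 - 2 ∨ 4*j3 + 1 < p) := fun h => hpw (hag3 p h)
    have h3q : ¬ (q < 4*j3 - 2 ∨ 4*j3 + 1 < q) := fun h => hqw (hag3 q h)
    omega
lemma necessary {n : ℕ} {u : Fin n → Bool} {s : Finset (Fin n → Bool)}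
    (hs : (SQ n).IsNClique 4 s) (hus : u ∈ s) :
    bitOf u 1 = false ∧ bitOf u 0 = false := by
  classical
  by_contra hab
  have hclique := hs.1
  have hcard := hs.2
  set B := s.filter (fun v => bitOf v 1 = bitOf u 1 ∧ bitOf v 0 = bitOf u 0) with hBdef
  have huB : u ∈ B := Finset.mem_filter.mpr ⟨hus, rfl, rfl⟩
  have hout : ∀ v ∈ s, v ∉ B → lowRel u v := by
    intro v hv hvB
    have hne : v ≠ u := by rintro rfl; exact hvB huB
    have h : (SQ n).Adj u v :=
      hclique (Finset.mem_coe.mpr hus) (Finset.mem_coe.mpr hv) hne.symm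
    rw [SQ, SimpleGraph.fromRel_adj] at h
    rcases h.2 with (hl | ⟨j, hj, -, hag, -⟩) | (hl | ⟨j, hj, -, hag, -⟩)
    · exact hl
    · have hlo := blockAgree_low hj hag
      exact absurd (Finset.mem_filter.mpr ⟨hv, hlo.1.symm, hlo.2.symm⟩) hvB
    · exact lowRel_symm hl
    · have hlo := blockAgree_low hj hag
      exact absurd (Finset.mem_filter.mpr ⟨hv, hlo.1, hlo.2⟩) hvB
  have hone : (s \ B).card ≤ 1 := by
    rw [Finset.card_le_one]
    intro v hv w hw
    obtain ⟨hvs, hvB⟩ := Finset.mem_sdiff.mp hv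
    obtain ⟨hws, hwB⟩ := Finset.mem_sdiff.mp hw
    obtain ⟨i, hi, hne, hag⟩ := hout v hvs hvB
    obtain ⟨i', hi', hne', hag'⟩ := hout w hws hwB
    by_cases hvw : v = w
    · exact hvw
    exfalso
    by_cases hii : i = i'
    · subst hii
      apply hvw
      apply bitOf_ext
      intro k
      by_cases hk : k = i
      · subst hk
        exact bool_ne_ne _ _ _ (fun h => hne h.symm) (fun h => hne' h.symm)
      · exact (hag k hk).symm.trans (hag' k hk)
    · have hd : bitOf v 0 ≠ bitOf w 0 ∧ bitOf v 1 ≠ bitOf w 1 := by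
        have e1 : i = 0 ∧ i' = 1 ∨ i = 1 ∧ i' = 0 := by omega
        rcases e1 with ⟨rfl, rfl⟩ | ⟨rfl, rfl⟩
        · exact ⟨fun h => hne ((hag' 0 (by omega)).trans h.symm),
            fun h => hne' ((hag 1 (by omega)).trans h)⟩
        · exact ⟨fun h => hne' ((hag 0 (by omega)).trans h),
            fun h => hne ((hag' 1 (by omega)).trans h.symm)⟩
      have hadj' : (SQ n).Adj v w :=
        hclique (Finset.mem_coe.mpr hvs) (Finset.mem_coe.mpr hws) hvw
      rw [SQ, SimpleGraph.fromRel_adj] at hadj'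
      rcases hadj'.2 with (⟨i'', hi'', -, hagv⟩ | ⟨j, hj, -, hag'', -⟩) |
        (⟨i'', hi'', -, hagv⟩ | ⟨j, hj, -, hag'', -⟩)
      · rcases (by omega : (0:ℕ) ≠ i'' ∨ (1:ℕ) ≠ i'') with h | h
        · exact hd.1 (hagv 0 h)
        · exact hd.2 (hagv 1 h)
      · exact hd.1 (blockAgree_low hj hag'').2
      · rcases (by omega : (0:ℕ) ≠ i'' ∨ (1:ℕ) ≠ i'') with h | h
        · exact hd.1 (hagv 0 h).symm
        · exact hd.2 (hagv 1 h).symm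
      · exact hd.1 (blockAgree_low hj hag'').2.symm
  have hsplit : B.card + (s \ B).card = s.card := by
    have h := Finset.card_filter_add_card_filter_not
      (s := s) (p := fun v => bitOf v 1 = bitOf u 1 ∧ bitOf v 0 = bitOf u 0)
    rwa [Finset.filter_not] at h
  have hB3 : 3 ≤ B.card := by omega
  have h2 : 2 ≤ (B.erase u).card := by rw [Finset.card_erase_of_mem huB]; omega
  obtain ⟨w1, hw1⟩ := Finset.card_pos.mp (by omega : 0 < (B.erase u).card)
  have h1' : 1 ≤ ((B.erase u).erase w1).card := by rw [Finset.card_erase_of_mem hw1]; omega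
  obtain ⟨w2, hw2⟩ := Finset.card_pos.mp (by omega : 0 < ((B.erase u).erase w1).card)
  obtain ⟨hw2ne, hw2'⟩ := Finset.mem_erase.mp hw2
  obtain ⟨hw1ne, hw1B⟩ := Finset.mem_erase.mp hw1
  obtain ⟨hw2une, hw2B⟩ := Finset.mem_erase.mp hw2'
  obtain ⟨hw1s, e11, e10⟩ := Finset.mem_filter.mp hw1B
  obtain ⟨hw2s, e21, e20⟩ := Finset.mem_filter.mp hw2B
  exact no_three hab e11 e10 e21 e20 (fun h => hw2ne (h.symm))
    (hclique (Finset.mem_coe.mpr hus) (Finset.mem_coe.mpr hw1s) hw1ne.symm)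
    (hclique (Finset.mem_coe.mpr hus) (Finset.mem_coe.mpr hw2s) hw2une.symm)
    (hclique (Finset.mem_coe.mpr hw1s) (Finset.mem_coe.mpr hw2s) (fun h => hw2ne h.symm))

/-- For `n ≡ 2 (mod 4)` with `n > 2`, a vertex `u` of `SQ_n` is contained in a
clique of size four if and only if `u_1 u_0 = 00`. -/
theorem SQ_mem_fourClique_iff (n : ℕ) (hn : n % 4 = 2) (hn2 : 2 < n) (u : Fin n → Bool) :
    (∃ s : Finset (Fin n → Bool), (SQ n).IsNClique 4 s ∧ u ∈ s) ↔
      (bitOf u 1 = false ∧ bitOf u 0 = false) := by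
  constructor
  · rintro ⟨s, hs, hus⟩
    exact necessary hs hus
  · rintro ⟨h1, h0⟩
    exact construct hn (by omega) u h1 h0
end

section
/- For every n ≡ 2 (mod 4) with n > 2, the clique number of the shuffle-cube SQ_n equals 4. -/
-- ==== auxiliary ====
abbrev B4 := Bool × Bool × Bool × Bool

def inVt (a b : Bool) (p : B4) : Prop := inV a b p.1 p.2.1 p.2.2.1 p.2.2.2

def xor4 (p q : B4) : B4 :=
  (xor p.1 q.1, xor p.2.1 q.2.1, xor p.2.2.1 q.2.2.1, xor p.2.2.2 q.2.2.2)

instance (a b : Bool) (p : B4) : Decidable (inVt a b p) := by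
  unfold inVt inV; infer_instance

def Vfin (a b : Bool) : Finset B4 := Finset.univ.filter (inVt a b)

lemma mem_Vfin {a b : Bool} {p : B4} : p ∈ Vfin a b ↔ inVt a b p := by
  simp [Vfin]

lemma Vfin_card : ∀ a b : Bool, (Vfin a b).card = 4 := by decide

lemma notzero : ∀ a b : Bool, ¬ inVt a b (false,false,false,false) := by decide

lemma exPair : ∀ a b : Bool, ∃ p q : B4, inVt a b p ∧ inVt a b q ∧ p ≠ q ∧
    ¬ inVt a b (xor4 p q) := by decide

lemma xor4_self (p : B4) : xor4 p p = (false,false,false,false) := by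
  simp [xor4]

def bXor {n : ℕ} (u v : Fin n → Bool) (k : ℕ) : Bool := xor (bitOf u k) (bitOf v k)

def blockRel {n : ℕ} (u v : Fin n → Bool) (j : ℕ) : Prop :=
  blockAgree u v j ∧ inVt (bitOf u 1) (bitOf u 0)
    (bXor u v (4*j+1), bXor u v (4*j), bXor u v (4*j-1), bXor u v (4*j-2))

lemma blockRel_low {n : ℕ} {u v : Fin n → Bool} {j : ℕ} (hj : 1 ≤ j)
    (h : blockRel u v j) : bitOf u 0 = bitOf v 0 ∧ bitOf u 1 = bitOf v 1 :=
  ⟨h.1 0 (Or.inl (by omega)), h.1 1 (Or.inl (by omega))⟩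

lemma blockRel_symm {n : ℕ} {u v : Fin n → Bool} {j : ℕ} (hj : 1 ≤ j)
    (h : blockRel u v j) : blockRel v u j := by
  obtain ⟨h0, h1⟩ := blockRel_low hj h
  refine ⟨fun k hk => (h.1 k hk).symm, ?_⟩
  rw [← h0, ← h1]
  have : ∀ k, bXor v u k = bXor u v k := fun k => Bool.xor_comm _ _
  simpa [this] using h.2

lemma adj_cases {n : ℕ} {u v : Fin n → Bool} (h : (SQ n).Adj u v) :
    lowRel u v ∨ ∃ j, 1 ≤ j ∧ blockRel u v j := by
  rw [SQ, SimpleGraph.fromRel_adj] at h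
  rcases h.2 with h' | h'
  · rcases h' with hl | ⟨j, hj1, _, ha, hv⟩
    · exact Or.inl hl
    · exact Or.inr ⟨j, hj1, ha, hv⟩
  · rcases h' with hl | ⟨j, hj1, _, ha, hv⟩
    · exact Or.inl (lowRel_symm hl)
    · exact Or.inr ⟨j, hj1, blockRel_symm hj1 ⟨ha, hv⟩⟩

lemma blockRel_exists_diff {n : ℕ} {u v : Fin n → Bool} {j : ℕ} (hj : 1 ≤ j)
    (h : blockRel u v j) : ∃ p, 4*j-2 ≤ p ∧ p ≤ 4*j+1 ∧ bitOf u p ≠ bitOf v p := by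
  by_contra hc
  push_neg at hc
  have e : ∀ p, 4*j-2 ≤ p → p ≤ 4*j+1 → bXor u v p = false := by
    intro p h1 h2
    have := hc p h1 h2
    simp [bXor, this]
  have h2 := h.2
  rw [e _ (by omega) (by omega), e _ (by omega) (by omega),
      e _ (by omega) (by omega), e _ (by omega) (by omega)] at h2
  exact notzero _ _ h2

def par {n : ℕ} (u : Fin n → Bool) : Bool := xor (bitOf u 0) (bitOf u 1)

def cls {n : ℕ} (u : Fin n → Bool) : Bool × Bool := (bitOf u 1, bitOf u 0)

lemma lowRel_high {n : ℕ} {u v : Fin n → Bool} (h : lowRel u v) :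
    ∀ k, 2 ≤ k → bitOf u k = bitOf v k := by
  obtain ⟨i, hi, _, hall⟩ := h
  exact fun k hk => hall k (by omega)

lemma lowRel_par {n : ℕ} {u v : Fin n → Bool} (h : lowRel u v) : par u ≠ par v := by
  obtain ⟨i, hi, hne, hall⟩ := h
  unfold par
  interval_cases i
  · rw [hall 1 (by omega)]
    intro hp; exact hne (by
      revert hp; cases (bitOf u 0) <;> cases (bitOf v 0) <;> cases (bitOf v 1) <;> simp)
  · rw [hall 0 (by omega)]
    intro hp; exact hne (by
      revert hp; cases (bitOf u 1) <;> cases (bitOf v 1) <;> cases (bitOf v 0) <;> simp)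

lemma lowRel_cls {n : ℕ} {u v : Fin n → Bool} (h : lowRel u v) : cls u ≠ cls v := by
  intro hc
  have h1 : bitOf u 1 = bitOf v 1 := congrArg Prod.fst hc
  have h0 : bitOf u 0 = bitOf v 0 := congrArg Prod.snd hc
  exact lowRel_par h (by unfold par; rw [h0, h1])

lemma blockRel_cls {n : ℕ} {u v : Fin n → Bool} {j : ℕ} (hj : 1 ≤ j)
    (h : blockRel u v j) : cls u = cls v := by
  obtain ⟨h0, h1⟩ := blockRel_low hj h
  unfold cls; rw [h0, h1]

lemma bool_ne_contra : ∀ a b c : Bool, a ≠ b → c ≠ a → c ≠ b → False := by decide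

lemma clique_same_cls {n : ℕ} {s : Finset (Fin n → Bool)}
    (hs : (SQ n).IsClique ↑s) (hcard : 3 ≤ s.card) :
    ∀ u ∈ s, ∀ v ∈ s, cls u = cls v := by
  by_contra hc
  push_neg at hc
  obtain ⟨u, hu, v, hv, huv⟩ := hc
  have hune : u ≠ v := fun h => huv (h ▸ rfl)
  have hadj := hs hu hv hune
  have hluv : lowRel u v := by
    rcases adj_cases hadj with h | ⟨j, hj, hb⟩
    · exact h
    · exact absurd (blockRel_cls hj hb) huv
  -- third vertex
  have : 1 ≤ ((s.erase u).erase v).card := by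
    have h1 := Finset.card_erase_le (a := v) (s := s.erase u)
    have := Finset.card_erase_of_mem hu
    have h2 : (s.erase u).card = s.card - 1 := this
    have h3 : ((s.erase u).erase v).card = (s.erase u).card - 1 ∨
        ((s.erase u).erase v).card = (s.erase u).card := by
      by_cases hvm : v ∈ s.erase u
      · exact Or.inl (Finset.card_erase_of_mem hvm)
      · exact Or.inr (by rw [Finset.erase_eq_of_notMem hvm])
    omega
  have hne3 : ((s.erase u).erase v).Nonempty := Finset.card_pos.mp (by omega)
  obtain ⟨w, hw⟩ := hne3
  have hwv : w ≠ v := (Finset.mem_erase.mp hw).1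
  have hwu : w ≠ u := (Finset.mem_erase.mp (Finset.mem_erase.mp hw).2).1
  have hws : w ∈ s := (Finset.mem_erase.mp (Finset.mem_erase.mp hw).2).2
  rcases adj_cases (hs hws hu hwu) with hwu' | ⟨j, hj, hb⟩
  · -- lowRel w u
    rcases adj_cases (hs hws hv hwv) with hwv' | ⟨j, hj, hb⟩
    · exact bool_ne_contra _ _ _ (lowRel_par hluv) (lowRel_par hwu') (lowRel_par hwv')
    · -- blockRel w v j : cls w = cls v, diff at high bit, but w,v agree high
      obtain ⟨p, hp1, hp2, hp3⟩ := blockRel_exists_diff hj hb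
      have hp : 2 ≤ p := by omega
      exact hp3 ((lowRel_high hwu' p hp).trans (lowRel_high hluv p hp))
  · -- blockRel w u j : cls w = cls u ≠ cls v, so edge w v is lowRel
    have hclwu : cls w = cls u := blockRel_cls hj hb
    have hwv' : lowRel w v := by
      rcases adj_cases (hs hws hv hwv) with h | ⟨j', hj', hb'⟩
      · exact h
      · exact absurd (hclwu ▸ blockRel_cls hj' hb') huv
    obtain ⟨p, hp1, hp2, hp3⟩ := blockRel_exists_diff hj hb
    have hp : 2 ≤ p := by omega
    exact hp3 ((lowRel_high hwv' p hp).trans (lowRel_high (lowRel_symm hluv) p hp))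

lemma xorxor : ∀ x y z : Bool, xor (xor x y) (xor x z) = xor y z := by decide

lemma clique_card_le {n : ℕ} {s : Finset (Fin n → Bool)}
    (hs : (SQ n).IsClique ↑s) : s.card ≤ 4 := by
  by_contra hcard
  push_neg at hcard
  have hcard5 : 5 ≤ s.card := hcard
  have hcl := clique_same_cls hs (by omega)
  have edge : ∀ u ∈ s, ∀ v ∈ s, u ≠ v → ∃ j, 1 ≤ j ∧ blockRel u v j := by
    intro u hu v hv huv
    rcases adj_cases (hs hu hv huv) with hl | h
    · exact absurd (hcl u hu v hv) (lowRel_cls hl)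
    · exact h
  have hsne : s.Nonempty := Finset.card_pos.mp (by omega)
  obtain ⟨u0, hu0⟩ := hsne
  have hec : (s.erase u0).card = s.card - 1 := Finset.card_erase_of_mem hu0
  have hene : (s.erase u0).Nonempty := Finset.card_pos.mp (by omega)
  obtain ⟨v1, hv1⟩ := hene
  have hmem : ∀ v ∈ s.erase u0, v ∈ s ∧ v ≠ u0 := by
    intro v hv
    exact ⟨(Finset.mem_erase.mp hv).2, (Finset.mem_erase.mp hv).1⟩
  have huniq : ∀ v ∈ s.erase u0, ∀ w ∈ s.erase u0, v ≠ w →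
      ∀ jv jw, 1 ≤ jv → blockRel u0 v jv → 1 ≤ jw → blockRel u0 w jw → jv = jw := by
    intro v hv w hw hvw jv jw hjv hbv hjw hbw
    by_contra hne
    obtain ⟨p, hp1, hp2, hp3⟩ := blockRel_exists_diff hjv hbv
    obtain ⟨q, hq1, hq2, hq3⟩ := blockRel_exists_diff hjw hbw
    have hpvw : bitOf v p ≠ bitOf w p := by
      have : bitOf u0 p = bitOf w p := hbw.1 p (by omega)
      intro h; exact hp3 (this ▸ h ▸ rfl)
    have hqvw : bitOf v q ≠ bitOf w q := by
      have : bitOf u0 q = bitOf v q := hbv.1 q (by omega)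
      intro h; exact hq3 (this ▸ h)
    obtain ⟨j', hj', hb'⟩ := edge v (hmem v hv).1 w (hmem w hw).1 hvw
    have hpin : 4*j'-2 ≤ p ∧ p ≤ 4*j'+1 := by
      by_contra hc
      exact hpvw (hb'.1 p (by omega))
    have hqin : 4*j'-2 ≤ q ∧ q ≤ 4*j'+1 := by
      by_contra hc
      exact hqvw (hb'.1 q (by omega))
    omega
  obtain ⟨j, hj1, hbj⟩ := edge u0 hu0 v1 (hmem v1 hv1).1 (Ne.symm (hmem v1 hv1).2)
  have hcom : ∀ v ∈ s.erase u0, blockRel u0 v j := by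
    intro v hv
    by_cases hvv : v = v1
    · exact hvv ▸ hbj
    · obtain ⟨jv, hjv, hbv⟩ := edge u0 hu0 v (hmem v hv).1 (Ne.symm (hmem v hv).2)
      have := huniq v hv v1 hv1 hvv jv j hjv hbv hj1 hbj
      exact this ▸ hbv
  have hpair : ∀ v ∈ s.erase u0, ∀ w ∈ s.erase u0, v ≠ w → blockRel v w j := by
    intro v hv w hw hvw
    obtain ⟨j', hj', hb'⟩ := edge v (hmem v hv).1 w (hmem w hw).1 hvw
    obtain ⟨q, hq1, hq2, hq3⟩ := blockRel_exists_diff hj' hb'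
    have hqin : 4*j-2 ≤ q ∧ q ≤ 4*j+1 := by
      by_contra hc
      have h1 : bitOf u0 q = bitOf v q := (hcom v hv).1 q (by omega)
      have h2 : bitOf u0 q = bitOf w q := (hcom w hw).1 q (by omega)
      exact hq3 (h1 ▸ h2 ▸ rfl)
    have : j' = j := by omega
    exact this ▸ hb'
  set a := bitOf u0 1 with ha
  set b := bitOf u0 0 with hb
  set t : (Fin n → Bool) → B4 := fun v =>
    (bXor u0 v (4*j+1), bXor u0 v (4*j), bXor u0 v (4*j-1), bXor u0 v (4*j-2)) with ht
  have hmemV : ∀ v ∈ s.erase u0, inVt a b (t v) := fun v hv => (hcom v hv).2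
  have hxor : ∀ v ∈ s.erase u0, ∀ w ∈ s.erase u0, v ≠ w →
      inVt a b (xor4 (t v) (t w)) ∧ t v ≠ t w := by
    intro v hv w hw hvw
    have hbvw := hpair v hv w hw hvw
    have hx : xor4 (t v) (t w) =
        (bXor v w (4*j+1), bXor v w (4*j), bXor v w (4*j-1), bXor v w (4*j-2)) := by
      have hc : ∀ k : ℕ, xor (bXor u0 v k) (bXor u0 w k) = bXor v w k :=
        fun k => xorxor _ _ _
      simp only [ht, xor4]
      rw [hc, hc, hc, hc]
    have e1 : bitOf v 1 = a := ((blockRel_low hj1 (hcom v hv)).2).symm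
    have e0 : bitOf v 0 = b := ((blockRel_low hj1 (hcom v hv)).1).symm
    have h2 := hbvw.2
    rw [e1, e0] at h2
    have hin : inVt a b (xor4 (t v) (t w)) := by rw [hx]; exact h2
    refine ⟨hin, ?_⟩
    intro he
    rw [he, xor4_self] at hin
    exact notzero _ _ hin
  have hinj : Set.InjOn t ↑(s.erase u0) := by
    intro v hv w hw hvw
    by_contra hne
    exact (hxor v hv w hw hne).2 hvw
  have hTcard : ((s.erase u0).image t).card = (s.erase u0).card :=
    Finset.card_image_of_injOn hinj
  have hTsub : (s.erase u0).image t ⊆ Vfin a b := by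
    intro p hp
    obtain ⟨v, hv, htv⟩ := Finset.mem_image.mp hp
    exact mem_Vfin.mpr (htv ▸ hmemV v hv)
  have hTeq : (s.erase u0).image t = Vfin a b := by
    apply Finset.eq_of_subset_of_card_le hTsub
    rw [hTcard, Vfin_card, hec]; omega
  obtain ⟨p, q, hp, hq, hpq, hnpq⟩ := exPair a b
  obtain ⟨v, hv, htv⟩ := Finset.mem_image.mp (hTeq ▸ mem_Vfin.mpr hp)
  obtain ⟨w, hw, htw⟩ := Finset.mem_image.mp (hTeq ▸ mem_Vfin.mpr hq)
  have hvw : v ≠ w := by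
    intro h; exact hpq (htv ▸ htw ▸ h ▸ rfl)
  have := (hxor v hv w hw hvw).1
  rw [htv, htw] at this
  exact hnpq this

def wv (n : ℕ) (c d : Bool) : Fin n → Bool :=
  fun k => if k.val = 3 then c else if k.val = 2 then d else false

lemma bitOf_wv {n : ℕ} {c d : Bool} {k : ℕ} (hk : k < n) :
    bitOf (wv n c d) k = if k = 3 then c else if k = 2 then d else false := by
  unfold bitOf wv
  rw [dif_pos hk]

lemma wv_ne {n : ℕ} (h3 : 3 < n) {c d c' d' : Bool} (h : ¬(c = c' ∧ d = d')) :
    wv n c d ≠ wv n c' d' := by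
  intro heq
  have hc := congrFun heq ⟨3, by omega⟩
  have hd := congrFun heq ⟨2, by omega⟩
  simp [wv] at hc hd
  exact h ⟨hc, hd⟩

instance (a b x3 x2 x1 x0 : Bool) : Decidable (inV a b x3 x2 x1 x0) := by
  unfold inV; infer_instance

lemma lowV : ∀ c d c' d' : Bool, ¬(c = c' ∧ d = d') →
    inV false false false false (xor c c') (xor d d') := by decide

lemma adjW {n : ℕ} (h6 : 6 ≤ n) {c d c' d' : Bool} (h : ¬(c = c' ∧ d = d')) :
    (SQ n).Adj (wv n c d) (wv n c' d') := by
  rw [SQ, SimpleGraph.fromRel_adj]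
  refine ⟨wv_ne (by omega) h, Or.inl (Or.inr ⟨1, le_refl 1, by omega, ?_, ?_⟩)⟩
  · intro k hk
    by_cases hkn : k < n
    · have e3 : k ≠ 3 := by omega
      have e2 : k ≠ 2 := by omega
      rw [bitOf_wv hkn, bitOf_wv hkn, if_neg e3, if_neg e3, if_neg e2, if_neg e2]
    · unfold bitOf
      rw [dif_neg hkn, dif_neg hkn]
  · have r1 : 4*1+1 = 5 := rfl
    have r2 : 4*1 = 4 := rfl
    have r3 : 4*1-1 = 3 := rfl
    have r4 : 4*1-2 = 2 := rfl
    rw [r1, r2, r3, r4, bitOf_wv (show 5 < n by omega), bitOf_wv (show 5 < n by omega),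
      bitOf_wv (show 4 < n by omega), bitOf_wv (show 4 < n by omega),
      bitOf_wv (show 3 < n by omega), bitOf_wv (show 3 < n by omega),
      bitOf_wv (show 2 < n by omega), bitOf_wv (show 2 < n by omega),
      bitOf_wv (show 1 < n by omega), bitOf_wv (show 0 < n by omega)]
    simpa using lowV c d c' d' h


/-- For every `n ≡ 2 (mod 4)` with `n > 2`, the clique number of the
shuffle-cube `SQ_n` equals 4. -/
theorem SQ_cliqueNum_eq_four (n : ℕ) (hn : n % 4 = 2) (hn2 : 2 < n) :
    (SQ n).cliqueNum = 4 := by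
  have h6 : 6 ≤ n := by omega
  apply le_antisymm
  · obtain ⟨s, snc⟩ := (SQ n).exists_isNClique_cliqueNum
    calc (SQ n).cliqueNum = s.card := snc.2.symm
      _ ≤ 4 := clique_card_le snc.1
  · set S : Finset (Fin n → Bool) :=
      {wv n false false, wv n false true, wv n true false, wv n true true} with hS
    have hcl : (SQ n).IsClique ↑S := by
      intro x hx y hy hxy
      simp only [hS, Finset.coe_insert, Set.mem_insert_iff, Finset.coe_singleton,
        Set.mem_singleton_iff] at hx hy
      rcases hx with rfl|rfl|rfl|rfl <;> rcases hy with rfl|rfl|rfl|rfl <;>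
        first
          | exact absurd rfl hxy
          | exact adjW h6 (by decide)
    have hScard : S.card = 4 := by
      rw [hS]
      rw [Finset.card_insert_of_notMem, Finset.card_insert_of_notMem,
        Finset.card_insert_of_notMem, Finset.card_singleton]
      · simp only [Finset.mem_singleton]
        exact wv_ne (by omega) (by decide)
      · simp only [Finset.mem_insert, Finset.mem_singleton]
        push_neg
        exact ⟨wv_ne (by omega) (by decide), wv_ne (by omega) (by decide)⟩
      · simp only [Finset.mem_insert, Finset.mem_singleton]
        push_neg
        exact ⟨wv_ne (by omega) (by decide), wv_ne (by omega) (by decide),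
          wv_ne (by omega) (by decide)⟩
    have := SimpleGraph.IsClique.card_le_cliqueNum (G := SQ n) (tc := hcl)
    omega
end

section
/- Let n ≡ 2 (mod 4) with n > 2. Every vertex u = u_{n-1}⋯u_1u_0 of the shuffle-cube SQ_n with u_1u_0 = 00 is contained in exactly (n-2)/4 cliques of size four. -/
section SQAux

/-- The mask of a block bflip: value `d3 d2 d1 d0` placed at positions
`4j+1, 4j, 4j-1, 4j-2`, zero elsewhere. -/
def mask (j : ℕ) (d3 d2 d1 d0 : Bool) (k : ℕ) : Bool :=
  if k = 4*j+1 then d3 else if k = 4*j then d2 else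
  if k = 4*j-1 then d1 else if k = 4*j-2 then d0 else false

/-- Flip vertex `u` by the mask of block `j`. -/
def bflip {n : ℕ} (u : Fin n → Bool) (j : ℕ) (d3 d2 d1 d0 : Bool) : Fin n → Bool :=
  fun i => xor (u i) (mask j d3 d2 d1 d0 i.val)

lemma inV_nonzero : ∀ a b x3 x2 x1 x0 : Bool, inV a b x3 x2 x1 x0 →
    (x3 || x2 || x1 || x0) = true := by decide

lemma boolaux1 : ∀ a b : Bool, a ≠ b → b = xor a true := by decide
lemma boolaux2 : ∀ a b : Bool, b = xor a (xor a b) := by decide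
lemma boolaux3 : ∀ a x y : Bool, xor a x = xor a y → x = y := by decide
lemma boolaux4 : ∀ a x y : Bool, xor (xor a x) (xor a y) = xor x y := by decide

lemma mask_hi (j : ℕ) (d3 d2 d1 d0 : Bool) : mask j d3 d2 d1 d0 (4*j+1) = d3 := by
  simp [mask]

lemma mask_2 (j : ℕ) (d3 d2 d1 d0 : Bool) : mask j d3 d2 d1 d0 (4*j) = d2 := by
  unfold mask; rw [if_neg (by omega), if_pos rfl]

lemma mask_1 {j : ℕ} (hj : 1 ≤ j) (d3 d2 d1 d0 : Bool) :
    mask j d3 d2 d1 d0 (4*j-1) = d1 := by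
  unfold mask; rw [if_neg (by omega), if_neg (by omega), if_pos rfl]

lemma mask_0 {j : ℕ} (hj : 1 ≤ j) (d3 d2 d1 d0 : Bool) :
    mask j d3 d2 d1 d0 (4*j-2) = d0 := by
  unfold mask; rw [if_neg (by omega), if_neg (by omega), if_neg (by omega), if_pos rfl]

lemma mask_out {j k : ℕ} (hj : 1 ≤ j) (h : k < 4*j-2 ∨ 4*j+1 < k) (d3 d2 d1 d0 : Bool) :
    mask j d3 d2 d1 d0 k = false := by
  unfold mask
  rw [if_neg (by omega), if_neg (by omega), if_neg (by omega), if_neg (by omega)]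

lemma mask_xor (j k : ℕ) (a3 a2 a1 a0 b3 b2 b1 b0 : Bool) :
    mask j (xor a3 b3) (xor a2 b2) (xor a1 b1) (xor a0 b0) k
      = xor (mask j a3 a2 a1 a0 k) (mask j b3 b2 b1 b0 k) := by
  unfold mask; split_ifs <;> rfl

lemma mask_false (j k : ℕ) : mask j false false false false k = false := by
  unfold mask; split_ifs <;> rfl

lemma mask_exists {j : ℕ} (hj : 1 ≤ j) {d3 d2 d1 d0 : Bool}
    (hnz : (d3 || d2 || d1 || d0) = true) :
    ∃ p, 4*j-2 ≤ p ∧ p ≤ 4*j+1 ∧ mask j d3 d2 d1 d0 p = true := by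
  by_cases h3 : d3 = true
  · exact ⟨4*j+1, by omega, by omega, by rw [mask_hi, h3]⟩
  by_cases h2 : d2 = true
  · exact ⟨4*j, by omega, by omega, by rw [mask_2, h2]⟩
  by_cases h1 : d1 = true
  · exact ⟨4*j-1, by omega, by omega, by rw [mask_1 hj, h1]⟩
  by_cases h0 : d0 = true
  · exact ⟨4*j-2, le_rfl, by omega, by rw [mask_0 hj, h0]⟩
  · exfalso
    simp only [Bool.not_eq_true] at h3 h2 h1 h0
    rw [h3, h2, h1, h0] at hnz
    simp at hnz

lemma bitOf_lt {n : ℕ} (u : Fin n → Bool) {k : ℕ} (h : k < n) :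
    bitOf u k = u ⟨k, h⟩ := dif_pos h

lemma eq_of_bitOf {n : ℕ} {v w : Fin n → Bool} (h : ∀ k, bitOf v k = bitOf w k) :
    v = w := by
  funext i
  have hh := h i.val
  rwa [bitOf_lt v i.isLt, bitOf_lt w i.isLt] at hh

lemma bitOf_flip {n : ℕ} (u : Fin n → Bool) {j : ℕ} (d3 d2 d1 d0 : Bool)
    (h : 4*j+1 < n) (k : ℕ) :
    bitOf (bflip u j d3 d2 d1 d0) k = xor (bitOf u k) (mask j d3 d2 d1 d0 k) := by
  unfold bitOf bflip
  by_cases hk : k < n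
  · simp [hk]
  · have hm : mask j d3 d2 d1 d0 k = false := by
      unfold mask
      rw [if_neg (by omega), if_neg (by omega), if_neg (by omega), if_neg (by omega)]
    simp [hk, hm]

/-- `v` is a "low-type" neighbour of `u`: bflip exactly bit `i < 2`. -/
def IsLow {n : ℕ} (u v : Fin n → Bool) : Prop :=
  ∃ i < 2, ∀ k, bitOf v k = xor (bitOf u k) (decide (k = i))

/-- `v` is a "block-type" neighbour of `u`. -/
def IsBlk {n : ℕ} (u v : Fin n → Bool) (m : ℕ) : Prop :=
  ∃ j, 1 ≤ j ∧ j ≤ m ∧ ∃ d3 d2 d1 d0, inV false false d3 d2 d1 d0 ∧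
    ∀ k, bitOf v k = xor (bitOf u k) (mask j d3 d2 d1 d0 k)

lemma adj_cases_s4 {n : ℕ} {v w : Fin n → Bool} (h : (SQ n).Adj v w) :
    (∃ i < 2, bitOf v i ≠ bitOf w i ∧ ∀ k, k ≠ i → bitOf v k = bitOf w k) ∨
    (∃ j, 1 ≤ j ∧ j ≤ (n-2)/4 ∧ (∀ k, (k < 4*j-2 ∨ 4*j+1 < k) → bitOf v k = bitOf w k) ∧
      (inV (bitOf v 1) (bitOf v 0)
        (xor (bitOf v (4*j+1)) (bitOf w (4*j+1))) (xor (bitOf v (4*j)) (bitOf w (4*j)))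
        (xor (bitOf v (4*j-1)) (bitOf w (4*j-1))) (xor (bitOf v (4*j-2)) (bitOf w (4*j-2)))
       ∨ inV (bitOf w 1) (bitOf w 0)
        (xor (bitOf v (4*j+1)) (bitOf w (4*j+1))) (xor (bitOf v (4*j)) (bitOf w (4*j)))
        (xor (bitOf v (4*j-1)) (bitOf w (4*j-1))) (xor (bitOf v (4*j-2)) (bitOf w (4*j-2))))) := by
  simp only [SQ, SimpleGraph.fromRel_adj] at h
  obtain ⟨hne, h | h⟩ := h
  · simp only [sqRel, lowRel, blockAgree] at h
    rcases h with h | ⟨j, hj1, hjm, hag, hV⟩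
    · exact Or.inl h
    · exact Or.inr ⟨j, hj1, hjm, hag, Or.inl hV⟩
  · simp only [sqRel, lowRel, blockAgree] at h
    rcases h with ⟨i, hi, hne', hall⟩ | ⟨j, hj1, hjm, hag, hV⟩
    · exact Or.inl ⟨i, hi, hne'.symm, fun k hk => (hall k hk).symm⟩
    · refine Or.inr ⟨j, hj1, hjm, fun k hk => (hag k hk).symm, Or.inr ?_⟩
      rw [Bool.xor_comm (bitOf v (4*j+1)), Bool.xor_comm (bitOf v (4*j)),
        Bool.xor_comm (bitOf v (4*j-1)), Bool.xor_comm (bitOf v (4*j-2))]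
      exact hV

lemma classify {n m : ℕ} {u v : Fin n → Bool} (hm : n = 4*m+2)
    (hu1 : bitOf u 1 = false) (hu0 : bitOf u 0 = false)
    (h : (SQ n).Adj u v) : IsLow u v ∨ IsBlk u v m := by
  rcases adj_cases_s4 h with ⟨i, hi, hne, hall⟩ | ⟨j, hj1, hjm, hag, hV⟩
  · left
    refine ⟨i, hi, fun k => ?_⟩
    by_cases hk : k = i
    · subst hk
      simpa using boolaux1 _ _ hne
    · rw [decide_eq_false hk, Bool.xor_false]
      exact (hall k hk).symm
  · right
    have hjm' : j ≤ m := by omega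
    have hv1 : bitOf v 1 = false := by
      rw [← hag 1 (Or.inl (by omega))]; exact hu1
    have hv0 : bitOf v 0 = false := by
      rw [← hag 0 (Or.inl (by omega))]; exact hu0
    have hV' : inV false false
        (xor (bitOf u (4*j+1)) (bitOf v (4*j+1))) (xor (bitOf u (4*j)) (bitOf v (4*j)))
        (xor (bitOf u (4*j-1)) (bitOf v (4*j-1))) (xor (bitOf u (4*j-2)) (bitOf v (4*j-2))) := by
      rcases hV with h' | h'
      · rwa [hu1, hu0] at h'
      · rwa [hv1, hv0] at h'
    refine ⟨j, hj1, hjm', _, _, _, _, hV', fun k => ?_⟩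
    by_cases hk3 : k = 4*j+1
    · subst hk3; rw [mask_hi]; exact boolaux2 _ _
    by_cases hk2 : k = 4*j
    · subst hk2; rw [mask_2]; exact boolaux2 _ _
    by_cases hk1 : k = 4*j-1
    · subst hk1; rw [mask_1 hj1]; exact boolaux2 _ _
    by_cases hk0 : k = 4*j-2
    · subst hk0; rw [mask_0 hj1]; exact boolaux2 _ _
    · have hout : k < 4*j-2 ∨ 4*j+1 < k := by omega
      rw [mask_out hj1 hout, Bool.xor_false]
      exact (hag k hout).symm

lemma not_adj_low_low {n : ℕ} {u v w : Fin n → Bool}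
    (hLv : IsLow u v) (hLw : IsLow u w) (h : (SQ n).Adj v w) : False := by
  obtain ⟨i, hi, hv⟩ := hLv
  obtain ⟨i', hi', hw⟩ := hLw
  have hii' : i ≠ i' := by
    rintro rfl
    exact h.ne (eq_of_bitOf fun k => (hv k).trans (hw k).symm)
  rcases adj_cases_s4 h with ⟨i'', hi'', hne, hall⟩ | ⟨j, hj1, hjm, hag, hV⟩
  · have key : ∀ t, t ≠ i'' → decide (t = i) = decide (t = i') := by
      intro t ht
      have hh := hall t ht
      rw [hv t, hw t] at hh
      exact boolaux3 _ _ _ hh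
    by_cases hI : i = i''
    · have h2 := key i' (fun hh => hii' (hI.trans hh.symm))
      simp [Ne.symm hii'] at h2
    · have h2 := key i hI
      simp [hii'] at h2
  · have hh := hag i (Or.inl (by omega))
    rw [hv i, hw i] at hh
    have := boolaux3 _ _ _ hh
    simp [hii'] at this

lemma not_adj_low_blk {n m : ℕ} {u v w : Fin n → Bool}
    (hLv : IsLow u v) (hBw : IsBlk u w m) (h : (SQ n).Adj v w) : False := by
  obtain ⟨i, hi, hv⟩ := hLv
  obtain ⟨j', hj'1, hj'm, e3, e2, e1, e0, he, hw⟩ := hBw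
  rcases adj_cases_s4 h with ⟨i'', hi'', hne, hall⟩ | ⟨j'', hj''1, hj''m, hag, hV⟩
  · obtain ⟨p, hp1, hp2, hpm⟩ := mask_exists hj'1 (inV_nonzero _ _ _ _ _ _ he)
    have hp2' : 2 ≤ p := by omega
    have hh := hall p (by omega)
    rw [hv p, hw p, hpm, decide_eq_false (by omega : ¬ p = i)] at hh
    have := boolaux3 _ _ _ hh
    simp at this
  · have hh := hag i (Or.inl (by omega))
    have hii : decide (i = i) = true := by simp
    rw [hv i, hw i, mask_out hj'1 (Or.inl (by omega)), hii] at hh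
    have := boolaux3 _ _ _ hh
    simp at this

lemma blk_blk {n : ℕ} {u v w : Fin n → Bool} {j j' : ℕ}
    {d3 d2 d1 d0 e3 e2 e1 e0 : Bool}
    (hu1 : bitOf u 1 = false) (hu0 : bitOf u 0 = false)
    (hj1 : 1 ≤ j) (hj'1 : 1 ≤ j')
    (hd : inV false false d3 d2 d1 d0) (he : inV false false e3 e2 e1 e0)
    (hv : ∀ k, bitOf v k = xor (bitOf u k) (mask j d3 d2 d1 d0 k))
    (hw : ∀ k, bitOf w k = xor (bitOf u k) (mask j' e3 e2 e1 e0 k))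
    (h : (SQ n).Adj v w) :
    j = j' ∧ inV false false (xor d3 e3) (xor d2 e2) (xor d1 e1) (xor d0 e0) := by
  have hδ : ∀ k, xor (bitOf v k) (bitOf w k)
      = xor (mask j d3 d2 d1 d0 k) (mask j' e3 e2 e1 e0 k) := by
    intro k; rw [hv, hw]; exact boolaux4 _ _ _
  rcases adj_cases_s4 h with ⟨i, hi, hne, hall⟩ | ⟨j'', hj''1, hj''m, hag, hV⟩
  · refine absurd ?_ hne
    rw [hv, hw, mask_out hj1 (Or.inl (by omega)), mask_out hj'1 (Or.inl (by omega))]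
  · have hv1 : bitOf v 1 = false := by
      rw [hv, mask_out hj1 (Or.inl (by omega)), Bool.xor_false, hu1]
    have hv0 : bitOf v 0 = false := by
      rw [hv, mask_out hj1 (Or.inl (by omega)), Bool.xor_false, hu0]
    have hw1 : bitOf w 1 = false := by
      rw [hw, mask_out hj'1 (Or.inl (by omega)), Bool.xor_false, hu1]
    have hw0 : bitOf w 0 = false := by
      rw [hw, mask_out hj'1 (Or.inl (by omega)), Bool.xor_false, hu0]
    have hV' : inV false false
        (xor (bitOf v (4*j''+1)) (bitOf w (4*j''+1))) (xor (bitOf v (4*j'')) (bitOf w (4*j'')))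
        (xor (bitOf v (4*j''-1)) (bitOf w (4*j''-1))) (xor (bitOf v (4*j''-2)) (bitOf w (4*j''-2))) := by
      rcases hV with h' | h'
      · rwa [hv1, hv0] at h'
      · rwa [hw1, hw0] at h'
    by_cases hjj : j'' = j
    · by_cases hjj' : j'' = j'
      · subst hjj; subst hjj'
        refine ⟨rfl, ?_⟩
        have c3 := hδ (4*j''+1); rw [mask_hi, mask_hi] at c3
        have c2 := hδ (4*j''); rw [mask_2, mask_2] at c2
        have c1 := hδ (4*j''-1); rw [mask_1 hj''1, mask_1 hj''1] at c1
        have c0 := hδ (4*j''-2); rw [mask_0 hj''1, mask_0 hj''1] at c0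
        rwa [c3, c2, c1, c0] at hV'
      · -- j'' = j, j'' ≠ j' : contradiction from e ≠ 0
        exfalso
        obtain ⟨p, hp1, hp2, hpm⟩ := mask_exists hj'1 (inV_nonzero _ _ _ _ _ _ he)
        have hout : p < 4*j''-2 ∨ 4*j''+1 < p := by omega
        have hh := hag p hout
        have hδp := hδ p
        rw [hh, Bool.xor_self] at hδp
        rw [mask_out hj1 (by omega), hpm] at hδp
        simp at hδp
    · by_cases hjj' : j'' = j'
      · exfalso
        obtain ⟨p, hp1, hp2, hpm⟩ := mask_exists hj1 (inV_nonzero _ _ _ _ _ _ hd)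
        have hout : p < 4*j''-2 ∨ 4*j''+1 < p := by omega
        have hh := hag p hout
        have hδp := hδ p
        rw [hh, Bool.xor_self] at hδp
        rw [mask_out hj'1 (by omega), hpm] at hδp
        simp at hδp
      · -- j'' different from both : the inV tuple is all-zero
        exfalso
        have z : ∀ q, (4*j''-2 ≤ q ∧ q ≤ 4*j''+1) → xor (bitOf v q) (bitOf w q) = false := by
          intro q hq
          rw [hδ q, mask_out hj1 (by omega), mask_out hj'1 (by omega)]
          rfl
        have hnz := inV_nonzero _ _ _ _ _ _ hV'
        rw [z _ ⟨by omega, by omega⟩, z _ ⟨by omega, by omega⟩,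
          z _ ⟨by omega, by omega⟩, z _ ⟨by omega, by omega⟩] at hnz
        simp at hnz

lemma not1111 : ∀ a3 a2 a1 a0 b3 b2 b1 b0 : Bool,
    inV false false a3 a2 a1 a0 → inV false false b3 b2 b1 b0 →
    inV false false (xor a3 b3) (xor a2 b2) (xor a1 b1) (xor a0 b0) →
    (a3 = false ∧ a2 = false ∧ a1 = false ∧ a0 = true) ∨
    (a3 = false ∧ a2 = false ∧ a1 = true ∧ a0 = false) ∨
    (a3 = false ∧ a2 = false ∧ a1 = true ∧ a0 = true) := by
  intro a3 a2 a1 a0 b3 b2 b1 b0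
  cases a3 <;> cases a2 <;> cases a1 <;> cases a0 <;>
    cases b3 <;> cases b2 <;> cases b1 <;> cases b0 <;> decide

lemma adj_of_blk {n m : ℕ} {u v w : Fin n → Bool} {j : ℕ}
    {d3 d2 d1 d0 e3 e2 e1 e0 : Bool}
    (hm : n = 4*m+2) (hu1 : bitOf u 1 = false) (hu0 : bitOf u 0 = false)
    (hj1 : 1 ≤ j) (hjm : j ≤ m)
    (hv : ∀ k, bitOf v k = xor (bitOf u k) (mask j d3 d2 d1 d0 k))
    (hw : ∀ k, bitOf w k = xor (bitOf u k) (mask j e3 e2 e1 e0 k))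
    (hV : inV false false (xor d3 e3) (xor d2 e2) (xor d1 e1) (xor d0 e0)) :
    (SQ n).Adj v w := by
  have hv1 : bitOf v 1 = false := by
    rw [hv, mask_out hj1 (Or.inl (by omega)), Bool.xor_false, hu1]
  have hv0 : bitOf v 0 = false := by
    rw [hv, mask_out hj1 (Or.inl (by omega)), Bool.xor_false, hu0]
  have hδ : ∀ k, xor (bitOf v k) (bitOf w k)
      = xor (mask j d3 d2 d1 d0 k) (mask j e3 e2 e1 e0 k) := by
    intro k; rw [hv, hw]; exact boolaux4 _ _ _
  simp only [SQ, SimpleGraph.fromRel_adj]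
  constructor
  · intro hvw
    obtain ⟨p, hp1, hp2, hpm⟩ := mask_exists hj1 (inV_nonzero _ _ _ _ _ _ hV)
    rw [mask_xor] at hpm
    have : xor (bitOf v p) (bitOf w p) = false := by rw [hvw, Bool.xor_self]
    rw [hδ p, hpm] at this
    simp at this
  · left
    simp only [sqRel, blockAgree]
    right
    refine ⟨j, hj1, by omega, ?_, ?_⟩
    · intro k hk
      rw [hv, hw, mask_out hj1 hk, mask_out hj1 hk]
    · rw [hv1, hv0]
      have c3 := hδ (4*j+1); rw [mask_hi, mask_hi] at c3
      have c2 := hδ (4*j); rw [mask_2, mask_2] at c2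
      have c1 := hδ (4*j-1); rw [mask_1 hj1, mask_1 hj1] at c1
      have c0 := hδ (4*j-2); rw [mask_0 hj1, mask_0 hj1] at c0
      rw [c3, c2, c1, c0]
      exact hV

lemma self_blk {n : ℕ} (u : Fin n → Bool) (j : ℕ) :
    ∀ k, bitOf u k = xor (bitOf u k) (mask j false false false false k) := by
  intro k; rw [mask_false, Bool.xor_false]

/-- The canonical 4-clique of block `j` at vertex `u`. -/
def Sj {n : ℕ} (u : Fin n → Bool) (j : ℕ) : Finset (Fin n → Bool) :=
  {u, bflip u j false false false true, bflip u j false false true false,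
    bflip u j false false true true}

lemma Sj_mem_self {n : ℕ} (u : Fin n → Bool) (j : ℕ) : u ∈ Sj u j := by
  simp [Sj]

lemma Sj_clique {n m : ℕ} {u : Fin n → Bool} {j : ℕ}
    (hm : n = 4*m+2) (hu1 : bitOf u 1 = false) (hu0 : bitOf u 0 = false)
    (hj1 : 1 ≤ j) (hjm : j ≤ m) : (SQ n).IsNClique 4 (Sj u j) := by
  have h4j : 4*j+1 < n := by omega
  have bfu := self_blk u j
  have bf1 := bitOf_flip u false false false true h4j
  have bf2 := bitOf_flip u false false true false h4j
  have bf3 := bitOf_flip u false false true true h4j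
  have hA : (SQ n).Adj u (bflip u j false false false true) :=
    adj_of_blk hm hu1 hu0 hj1 hjm bfu bf1 (by decide)
  have hB : (SQ n).Adj u (bflip u j false false true false) :=
    adj_of_blk hm hu1 hu0 hj1 hjm bfu bf2 (by decide)
  have hC : (SQ n).Adj u (bflip u j false false true true) :=
    adj_of_blk hm hu1 hu0 hj1 hjm bfu bf3 (by decide)
  have hAB : (SQ n).Adj (bflip u j false false false true) (bflip u j false false true false) :=
    adj_of_blk hm hu1 hu0 hj1 hjm bf1 bf2 (by decide)
  have hAC : (SQ n).Adj (bflip u j false false false true) (bflip u j false false true true) :=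
    adj_of_blk hm hu1 hu0 hj1 hjm bf1 bf3 (by decide)
  have hBC : (SQ n).Adj (bflip u j false false true false) (bflip u j false false true true) :=
    adj_of_blk hm hu1 hu0 hj1 hjm bf2 bf3 (by decide)
  constructor
  · intro a ha b hb hab
    simp only [Sj, Finset.coe_insert, Set.mem_insert_iff, Finset.coe_singleton,
      Set.mem_singleton_iff] at ha hb
    rcases ha with rfl | rfl | rfl | rfl <;> rcases hb with rfl | rfl | rfl | rfl <;>
      first
        | exact absurd rfl hab
        | exact hA | exact hB | exact hC | exact hAB | exact hAC | exact hBC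
        | exact hA.symm | exact hB.symm | exact hC.symm
        | exact hAB.symm | exact hAC.symm | exact hBC.symm
  · show Finset.card _ = 4
    rw [Sj]
    rw [Finset.card_insert_of_notMem (by
      simp only [Finset.mem_insert, Finset.mem_singleton]
      push_neg
      exact ⟨hA.ne, hB.ne, hC.ne⟩)]
    rw [Finset.card_insert_of_notMem (by
      simp only [Finset.mem_insert, Finset.mem_singleton]
      push_neg
      exact ⟨hAB.ne, hAC.ne⟩)]
    rw [Finset.card_insert_of_notMem (by
      simp only [Finset.mem_singleton]
      exact hBC.ne)]
    rfl

lemma clique_eq {n m : ℕ} {u : Fin n → Bool} {s : Finset (Fin n → Bool)}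
    (hm : n = 4*m+2) (hu1 : bitOf u 1 = false) (hu0 : bitOf u 0 = false)
    (hs : (SQ n).IsNClique 4 s) (hus : u ∈ s) :
    ∃ j, 1 ≤ j ∧ j ≤ m ∧ s = Sj u j := by
  obtain ⟨hcl, hcard⟩ := hs
  have hc3 : (s.erase u).card = 3 := by
    rw [Finset.card_erase_of_mem hus, hcard]
  obtain ⟨a, b, c, hab, hac, hbc, habc⟩ := Finset.card_eq_three.mp hc3
  have haE : a ∈ s.erase u := by rw [habc]; simp
  have hbE : b ∈ s.erase u := by rw [habc]; simp
  have hcE : c ∈ s.erase u := by rw [habc]; simp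
  have ha : a ∈ s := Finset.mem_of_mem_erase haE
  have hb : b ∈ s := Finset.mem_of_mem_erase hbE
  have hc : c ∈ s := Finset.mem_of_mem_erase hcE
  have hau : a ≠ u := Finset.ne_of_mem_erase haE
  have hbu : b ≠ u := Finset.ne_of_mem_erase hbE
  have hcu : c ≠ u := Finset.ne_of_mem_erase hcE
  have hUA : (SQ n).Adj u a := hcl (Finset.mem_coe.mpr hus) (Finset.mem_coe.mpr ha) hau.symm
  have hUB : (SQ n).Adj u b := hcl (Finset.mem_coe.mpr hus) (Finset.mem_coe.mpr hb) hbu.symm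
  have hUC : (SQ n).Adj u c := hcl (Finset.mem_coe.mpr hus) (Finset.mem_coe.mpr hc) hcu.symm
  have hAB : (SQ n).Adj a b := hcl (Finset.mem_coe.mpr ha) (Finset.mem_coe.mpr hb) hab
  have hAC : (SQ n).Adj a c := hcl (Finset.mem_coe.mpr ha) (Finset.mem_coe.mpr hc) hac
  have hBA : IsBlk u a m := by
    rcases classify hm hu1 hu0 hUA with hL | hB
    · exfalso
      rcases classify hm hu1 hu0 hUB with hL' | hB'
      · exact not_adj_low_low hL hL' hAB
      · exact not_adj_low_blk hL hB' hAB
    · exact hB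
  have hBB : IsBlk u b m := by
    rcases classify hm hu1 hu0 hUB with hL | hB
    · exact absurd hAB.symm (fun hh => not_adj_low_blk hL hBA hh)
    · exact hB
  have hBC' : IsBlk u c m := by
    rcases classify hm hu1 hu0 hUC with hL | hB
    · exact absurd hAC.symm (fun hh => not_adj_low_blk hL hBA hh)
    · exact hB
  obtain ⟨ja, hja1, hjam, a3, a2, a1, a0, hda, hva⟩ := hBA
  obtain ⟨jb, hjb1, hjbm, b3, b2, b1, b0, hdb, hvb⟩ := hBB
  obtain ⟨jc, hjc1, hjcm, c3, c2, c1, c0, hdc, hvc⟩ := hBC'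
  obtain ⟨hjab, hVab⟩ := blk_blk hu1 hu0 hja1 hjb1 hda hdb hva hvb hAB
  obtain ⟨hjac, hVac⟩ := blk_blk hu1 hu0 hja1 hjc1 hda hdc hva hvc hAC
  subst hjab; subst hjac
  have hVba : inV false false (xor b3 a3) (xor b2 a2) (xor b1 a1) (xor b0 a0) := by
    rw [Bool.xor_comm b3, Bool.xor_comm b2, Bool.xor_comm b1, Bool.xor_comm b0]
    exact hVab
  have hVca : inV false false (xor c3 a3) (xor c2 a2) (xor c1 a1) (xor c0 a0) := by
    rw [Bool.xor_comm c3, Bool.xor_comm c2, Bool.xor_comm c1, Bool.xor_comm c0]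
    exact hVac
  have opts_a := not1111 _ _ _ _ _ _ _ _ hda hdb hVab
  have opts_b := not1111 _ _ _ _ _ _ _ _ hdb hda hVba
  have opts_c := not1111 _ _ _ _ _ _ _ _ hdc hda hVca
  have h4j : 4*ja+1 < n := by omega
  have haf : a = bflip u ja a3 a2 a1 a0 :=
    eq_of_bitOf fun k => (hva k).trans (bitOf_flip u a3 a2 a1 a0 h4j k).symm
  have hbf : b = bflip u ja b3 b2 b1 b0 :=
    eq_of_bitOf fun k => (hvb k).trans (bitOf_flip u b3 b2 b1 b0 h4j k).symm
  have hcf : c = bflip u ja c3 c2 c1 c0 :=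
    eq_of_bitOf fun k => (hvc k).trans (bitOf_flip u c3 c2 c1 c0 h4j k).symm
  have hs_eq : s = insert u {a, b, c} := by rw [← habc, Finset.insert_erase hus]
  refine ⟨ja, hja1, hjam, ?_⟩
  have hsub : s ⊆ Sj u ja := by
    intro x hx
    rw [hs_eq] at hx
    simp only [Finset.mem_insert, Finset.mem_singleton] at hx
    rcases hx with h | h | h | h
    · rw [h]; exact Sj_mem_self u ja
    · rw [h, haf]
      rcases opts_a with ⟨e3, e2, e1, e0⟩ | ⟨e3, e2, e1, e0⟩ | ⟨e3, e2, e1, e0⟩ <;>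
        (subst e3; subst e2; subst e1; subst e0; simp [Sj])
    · rw [h, hbf]
      rcases opts_b with ⟨e3, e2, e1, e0⟩ | ⟨e3, e2, e1, e0⟩ | ⟨e3, e2, e1, e0⟩ <;>
        (subst e3; subst e2; subst e1; subst e0; simp [Sj])
    · rw [h, hcf]
      rcases opts_c with ⟨e3, e2, e1, e0⟩ | ⟨e3, e2, e1, e0⟩ | ⟨e3, e2, e1, e0⟩ <;>
        (subst e3; subst e2; subst e1; subst e0; simp [Sj])
  exact Finset.eq_of_subset_of_card_le hsub
    (by rw [hcard, (Sj_clique hm hu1 hu0 hja1 hjam).card_eq])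

lemma Sj_inj {n m : ℕ} {u : Fin n → Bool} {j j' : ℕ} (hm : n = 4*m+2)
    (hj1 : 1 ≤ j) (hjm : j ≤ m) (hj'1 : 1 ≤ j') (hj'm : j' ≤ m)
    (h : Sj u j = Sj u j') : j = j' := by
  by_contra hne
  have h4j : 4*j+1 < n := by omega
  have h4j' : 4*j'+1 < n := by omega
  have hA : bflip u j false false false true ∈ Sj u j' := by
    rw [← h]; simp [Sj]
  have key : ∀ e3 e2 e1 e0 : Bool,
      bflip u j false false false true ≠ bflip u j' e3 e2 e1 e0 := by
    intro e3 e2 e1 e0 hh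
    have hb := congrArg (fun z => bitOf z (4*j-2)) hh
    simp only [bitOf_flip u _ _ _ _ h4j, bitOf_flip u _ _ _ _ h4j'] at hb
    rw [mask_0 hj1, mask_out hj'1 (by omega)] at hb
    revert hb
    cases bitOf u (4*j-2) <;> decide
  simp only [Sj, Finset.mem_insert, Finset.mem_singleton] at hA
  rcases hA with hh | hh | hh | hh
  · have hb := congrArg (fun z => bitOf z (4*j-2)) hh
    simp only [bitOf_flip u _ _ _ _ h4j] at hb
    rw [mask_0 hj1] at hb
    revert hb
    cases bitOf u (4*j-2) <;> decide
  · exact key _ _ _ _ hh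
  · exact key _ _ _ _ hh
  · exact key _ _ _ _ hh
/-- For `n ≡ 2 (mod 4)` with `n > 2`, every vertex `u` of `SQ_n` with
`u_1 u_0 = 00` is contained in exactly `(n-2)/4` cliques of size four. -/
theorem SQ_fourClique_count (n : ℕ) (hn : n % 4 = 2) (hn2 : 2 < n) (u : Fin n → Bool)
    (h1 : bitOf u 1 = false) (h0 : bitOf u 0 = false) :
    {s : Finset (Fin n → Bool) | (SQ n).IsNClique 4 s ∧ u ∈ s}.ncard = (n - 2) / 4 := by
  have hm : n = 4*((n-2)/4)+2 := by omega
  have hset : {s : Finset (Fin n → Bool) | (SQ n).IsNClique 4 s ∧ u ∈ s}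
      = (Sj u) '' (Set.Icc 1 ((n-2)/4)) := by
    ext s
    simp only [Set.mem_setOf_eq, Set.mem_image, Set.mem_Icc]
    constructor
    · rintro ⟨hcl, hus⟩
      obtain ⟨j, hj1, hjm, rfl⟩ := clique_eq hm h1 h0 hcl hus
      exact ⟨j, ⟨hj1, hjm⟩, rfl⟩
    · rintro ⟨j, ⟨hj1, hjm⟩, rfl⟩
      exact ⟨Sj_clique hm h1 h0 hj1 hjm, Sj_mem_self u j⟩
  have hinj : Set.InjOn (Sj u) (Set.Icc 1 ((n-2)/4)) := by
    intro j hj j' hj' hEq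
    rw [Set.mem_Icc] at hj hj'
    exact Sj_inj hm hj.1 hj.2 hj'.1 hj'.2 hEq
  rw [hset, Set.ncard_image_of_injOn hinj, ← Finset.coe_Icc, Set.ncard_coe_finset,
    Nat.card_Icc]
  omega
end SQAux
end

section
/- For every n ≡ 2 (mod 4) with n ≥ 2, the simplified shuffle-cube SSQ_n is vertex-transitive: for each pair of vertices u, v of SSQ_n there exists a graph automorphism of SSQ_n mapping u to v. -/
/-- Membership in `V_{00} = {1111, 0001, 0010, 0011}`. -/
def inV00 (x3 x2 x1 x0 : Bool) : Prop :=
  (x3, x2, x1, x0) ∈ [(true,true,true,true),(false,false,false,true),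
      (false,false,true,false),(false,false,true,true)]

/-- Vertices of the simplified shuffle-cube `SSQ_n`: binary strings of length `n` with
`u_{4j+1} u_{4j} ∈ {00, 11}` for every `1 ≤ j ≤ (n-2)/4`. -/
def SSQVert (n : ℕ) : Type :=
  {u : Fin n → Bool // ∀ j, 1 ≤ j → j ≤ (n-2)/4 → bitOf u (4*j+1) = bitOf u (4*j)}

instance {n : ℕ} : DecidableEq (SSQVert n) :=
  fun a b => decidable_of_iff (a.1 = b.1) Subtype.ext_iff.symm

def ssqRel {n : ℕ} (u v : SSQVert n) : Prop :=
  lowRel u.1 v.1 ∨ ∃ j, 1 ≤ j ∧ j ≤ (n-2)/4 ∧ blockAgree u.1 v.1 j ∧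
    inV00
      (xor (bitOf u.1 (4*j+1)) (bitOf v.1 (4*j+1)))
      (xor (bitOf u.1 (4*j))   (bitOf v.1 (4*j)))
      (xor (bitOf u.1 (4*j-1)) (bitOf v.1 (4*j-1)))
      (xor (bitOf u.1 (4*j-2)) (bitOf v.1 (4*j-2)))

/-- The `n`-dimensional simplified shuffle-cube `SSQ_n`. -/
def SSQ (n : ℕ) : SimpleGraph (SSQVert n) := SimpleGraph.fromRel ssqRel

lemma bitOf_xor {n : ℕ} (u w : Fin n → Bool) (k : ℕ) :
    bitOf (fun i => xor (u i) (w i)) k = xor (bitOf u k) (bitOf w k) := by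
  unfold bitOf; split <;> simp

lemma xor_eq_iff' (a b c : Bool) : (xor a c = xor b c) ↔ a = b := by
  cases a <;> cases b <;> cases c <;> simp

lemma xor_xor_cancel (a b c : Bool) : xor (xor a c) (xor b c) = xor a b := by
  cases a <;> cases b <;> cases c <;> rfl

def xorVert {n : ℕ} (w u : SSQVert n) : SSQVert n :=
  ⟨fun i => xor (u.1 i) (w.1 i), by
    intro j h1 h2
    rw [bitOf_xor, bitOf_xor, u.2 j h1 h2, w.2 j h1 h2]⟩

lemma xorVert_invol {n : ℕ} (w u : SSQVert n) :
    xorVert w (xorVert w u) = u := by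
  apply Subtype.ext; funext i; simp [xorVert]

lemma lowRel_xor {n : ℕ} (w u v : SSQVert n) :
    lowRel (xorVert w u).1 (xorVert w v).1 ↔ lowRel u.1 v.1 := by
  unfold lowRel
  simp only [xorVert, bitOf_xor, ne_eq, xor_eq_iff']

lemma blockAgree_xor {n : ℕ} (w u v : SSQVert n) (j : ℕ) :
    blockAgree (xorVert w u).1 (xorVert w v).1 j ↔ blockAgree u.1 v.1 j := by
  unfold blockAgree
  simp only [xorVert, bitOf_xor, xor_eq_iff']

lemma ssqRel_xor {n : ℕ} (w u v : SSQVert n) :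
    ssqRel (xorVert w u) (xorVert w v) ↔ ssqRel u v := by
  unfold ssqRel
  rw [lowRel_xor]
  refine or_congr Iff.rfl (exists_congr fun j => ?_)
  rw [blockAgree_xor]
  simp only [xorVert, bitOf_xor, xor_xor_cancel]

lemma xorVert_inj {n : ℕ} (w u v : SSQVert n) (h : xorVert w u = xorVert w v) :
    u = v := by
  have := congrArg (xorVert w) h
  rwa [xorVert_invol, xorVert_invol] at this

def xorIso {n : ℕ} (w : SSQVert n) : SSQ n ≃g SSQ n where
  toFun := xorVert w
  invFun := xorVert w
  left_inv := xorVert_invol w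
  right_inv := xorVert_invol w
  map_rel_iff' := by
    intro u v
    show (SSQ n).Adj (xorVert w u) (xorVert w v) ↔ (SSQ n).Adj u v
    simp only [SSQ, SimpleGraph.fromRel_adj, ssqRel_xor]
    constructor
    · rintro ⟨hne, h⟩
      exact ⟨fun he => hne (congrArg (xorVert w) he), h⟩
    · rintro ⟨hne, h⟩
      exact ⟨fun he => hne (xorVert_inj w u v he), h⟩

/-- For every `n ≡ 2 (mod 4)` (so `n ≥ 2`), the simplified shuffle-cube `SSQ_n`
is vertex-transitive. -/
theorem SSQ_vertexTransitive (n : ℕ) (hn : n % 4 = 2) :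
    ∀ u v : SSQVert n, ∃ φ : SSQ n ≃g SSQ n, φ u = v := by
  intro u v
  refine ⟨xorIso (xorVert u v), ?_⟩
  apply Subtype.ext; funext i
  simp [xorIso, xorVert, Bool.xor_comm]
end

section
/- For every n ≡ 2 (mod 4) with n > 2, the simplified shuffle-cube SSQ_n is not bipartite. -/
section Aux

variable {n : ℕ}

/-- vertex with support S ⊆ {2,3} -/
def vertS (n : ℕ) (b2 b3 : Bool) : Fin n → Bool :=
  fun i => if i.val = 2 then b2 else if i.val = 3 then b3 else false

lemma bitOf_vertS (b2 b3 : Bool) (k : ℕ) :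
    bitOf (vertS n b2 b3) k = if k < n then (if k = 2 then b2 else if k = 3 then b3 else false) else false := by
  unfold bitOf vertS
  split <;> simp_all

lemma vertS_mem (b2 b3 : Bool) :
    ∀ j, 1 ≤ j → j ≤ (n-2)/4 → bitOf (vertS n b2 b3) (4*j+1) = bitOf (vertS n b2 b3) (4*j) := by
  intro j hj _
  rw [bitOf_vertS, bitOf_vertS]
  have h1 : 4*j+1 ≠ 2 ∧ 4*j+1 ≠ 3 ∧ 4*j ≠ 2 ∧ 4*j ≠ 3 := by omega
  simp [h1.1, h1.2.1, h1.2.2.1, h1.2.2.2]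

def mkVert (b2 b3 : Bool) : SSQVert n := ⟨vertS n b2 b3, vertS_mem b2 b3⟩

lemma mkVert_adj (hn2 : 5 < n) (hd : 1 ≤ (n-2)/4) (b2 b3 c2 c3 : Bool)
    (hne : (b2, b3) ≠ (c2, c3)) (hv : inV00 false false (xor b3 c3) (xor b2 c2)) :
    (SSQ n).Adj (mkVert b2 b3) (mkVert c2 c3) := by
  constructor
  · intro h
    apply hne
    have h2 : (mkVert (n := n) b2 b3).1 ⟨2, by omega⟩ = (mkVert (n := n) c2 c3).1 ⟨2, by omega⟩ := by rw [h]
    have h3 : (mkVert (n := n) b2 b3).1 ⟨3, by omega⟩ = (mkVert (n := n) c2 c3).1 ⟨3, by omega⟩ := by rw [h]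
    simp [mkVert, vertS] at h2 h3
    simp [h2, h3]
  · left
    right
    refine ⟨1, le_refl _, hd, ?_, ?_⟩
    · intro k hk
      show bitOf (vertS n b2 b3) k = bitOf (vertS n c2 c3) k
      rw [bitOf_vertS, bitOf_vertS]
      have : k ≠ 2 ∧ k ≠ 3 := by omega
      simp [this.1, this.2]
    · have e5 : ∀ b2 b3 : Bool, bitOf (vertS n b2 b3) 5 = false := by
        intro b2 b3; rw [bitOf_vertS]; norm_num
      have e4 : ∀ b2 b3 : Bool, bitOf (vertS n b2 b3) 4 = false := by
        intro b2 b3; rw [bitOf_vertS]; norm_num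
      have e3 : ∀ b2 b3 : Bool, bitOf (vertS n b2 b3) 3 = b3 := by
        intro b2 b3; rw [bitOf_vertS]; norm_num; omega
      have e2 : ∀ b2 b3 : Bool, bitOf (vertS n b2 b3) 2 = b2 := by
        intro b2 b3; rw [bitOf_vertS]; norm_num; omega
      show inV00 _ _ _ _
      norm_num [mkVert, e5, e4, e3, e2]
      exact hv

end Aux

/-- For every `n ≡ 2 (mod 4)` with `n > 2`, the simplified shuffle-cube `SSQ_n`
is not bipartite (i.e. not 2-colorable). -/
theorem SSQ_not_bipartite (n : ℕ) (hn : n % 4 = 2) (hn2 : 2 < n) :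
    ¬ (SSQ n).Colorable 2 := by
  intro hc
  obtain ⟨C⟩ := hc
  have h6 : 5 < n := by omega
  have hd : 1 ≤ (n-2)/4 := by omega
  have hab := C.valid (mkVert_adj h6 hd false false true false (by simp) (by simp [inV00]))
  have hac := C.valid (mkVert_adj h6 hd false false true true (by simp) (by simp [inV00]))
  have hbc := C.valid (mkVert_adj h6 hd true false true true (by simp) (by simp [inV00]))
  set a := C (mkVert false false)
  set b := C (mkVert true false)
  set c := C (mkVert true true)
  have := a.isLt; have := b.isLt; have := c.isLt
  have h1 : a.val ≠ b.val := fun h => hab (Fin.ext h)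
  have h2 : a.val ≠ c.val := fun h => hac (Fin.ext h)
  have h3 : b.val ≠ c.val := fun h => hbc (Fin.ext h)
  omega
end

section
/- For every n ≡ 2 (mod 4) with n > 2, the simplified shuffle-cube SSQ_n contains a Hamiltonian cycle, i.e., a cycle passing through every vertex of SSQ_n exactly once. -/
/-!
Write `n = 4m + 2`. Inside the `j`-th block, the strings with `u_{4j+1} = u_{4j}` form a
3-dimensional space over `𝔽₂` with basis `0001, 0010, 1111`, three elements of `V_{00}`. Hence
sending the coordinates `x_{3j-1}, x_{3j}, x_{3j+1}` of a vertex of the hypercube `Q_{3m+2}`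
to these basis vectors of block `j`, and `x_1 x_0` to `u_1 u_0`, is a bijection from `Q_{3m+2}`
onto the vertices of `SSQ_n` which maps flips of one coordinate to edges of `SSQ_n`. So `SSQ_n`
has a spanning hypercube, and the reflected Gray code `t ↦ t xor ⌊t/2⌋`, which changes one bit
at each step including the step from `2^B - 1` back to `0`, runs through a Hamiltonian cycle of
`Q_B`.
-/

open Function

namespace Nat

def grayCode (t : ℕ) : ℕ := t ^^^ (t >>> 1)

theorem testBit_grayCode (t i : ℕ) :
    (grayCode t).testBit i = (t.testBit i ^^ t.testBit (i + 1)) := by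
  rw [grayCode, testBit_xor, testBit_shiftRight, Nat.add_comm]

theorem grayCode_xor (a b : ℕ) : grayCode (a ^^^ b) = grayCode a ^^^ grayCode b :=
  eq_of_testBit_eq fun i => by
    simp only [testBit_grayCode, testBit_xor]
    cases a.testBit i <;> cases b.testBit i <;> simp

theorem grayCode_two_pow_sub_one (k : ℕ) : grayCode (2 ^ (k + 1) - 1) = 2 ^ k :=
  eq_of_testBit_eq fun i => by
    rw [testBit_grayCode, testBit_two_pow_sub_one, testBit_two_pow_sub_one, testBit_two_pow,
      Bool.eq_iff_iff]
    simp only [Order.lt_add_one_iff, Order.add_one_le_iff, bne_iff_ne, ne_eq, decide_eq_decide,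
      decide_eq_true_eq]
    omega

theorem exists_xor_add_one_eq_two_pow_sub_one (t : ℕ) :
    ∃ k, t ^^^ (t + 1) = 2 ^ (k + 1) - 1 := by
  induction t using Nat.binaryRec with
  | zero => exact ⟨0, rfl⟩
  | bit b a ih =>
    cases b
    · refine ⟨0, ?_⟩
      have : bit false a + 1 = bit true a := by simp [bit_val]
      rw [this, xor_bit, Nat.xor_self]
      rfl
    · obtain ⟨k, hk⟩ := ih
      refine ⟨k + 1, ?_⟩
      have : bit true a + 1 = bit false (a + 1) := by
        simp only [bit_val, Bool.toNat_true, Bool.toNat_false, add_zero]; omega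
      rw [this, xor_bit, hk, bit_val]
      have : 0 < 2 ^ (k + 1) := by positivity
      simp only [pow_succ, Bool.bne_false, Bool.toNat_true]
      omega

theorem exists_grayCode_xor_grayCode_add_one_eq_two_pow (t : ℕ) :
    ∃ k, grayCode t ^^^ grayCode (t + 1) = 2 ^ k := by
  obtain ⟨k, hk⟩ := exists_xor_add_one_eq_two_pow_sub_one t
  exact ⟨k, by rw [← grayCode_xor, hk, grayCode_two_pow_sub_one]⟩

theorem grayCode_injective : Injective grayCode := by
  intro a b h
  have h0 : grayCode (a ^^^ b) = 0 := by rw [grayCode_xor, h, Nat.xor_self]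
  rw [grayCode, xor_eq_zero_iff, shiftRight_one] at h0
  exact xor_eq_zero_iff.mp (by omega)

theorem grayCode_lt_two_pow {t B : ℕ} (h : t < 2 ^ B) : grayCode t < 2 ^ B :=
  xor_lt_two_pow h (lt_of_le_of_lt (shiftRight_le t 1) h)

end Nat

namespace SimpleGraph

def hypercube (B : ℕ) : SimpleGraph (Fin B → Bool) where
  Adj x y := hammingDist x y = 1
  symm := ⟨fun x y h => by rwa [hammingDist_comm]⟩
  loopless := ⟨fun x h => by simp at h⟩

theorem hypercube_adj_iff {B : ℕ} {x y : Fin B → Bool} :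
    (hypercube B).Adj x y ↔ ∃ k, ∀ i, x i ≠ y i ↔ i = k := by
  simp only [hypercube, hammingDist, Finset.card_eq_one, Finset.ext_iff, Finset.mem_filter,
    Finset.mem_univ, true_and, Finset.mem_singleton]

theorem cycleGraph.isHamiltonianCycle_cycle (n : ℕ) :
    (cycleGraph.cycle n).IsHamiltonianCycle :=
  Walk.isHamiltonianCycle_iff_isCycle_and_length_eq.mpr
    ⟨cycleGraph.isCycle_cycle, by simp [cycleGraph.length_cycle]⟩

theorem exists_isHamiltonianCycle_of_adj_add_one {V : Type*} [DecidableEq V]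
    {G : SimpleGraph V} {N : ℕ} [NeZero N] (hN : 3 ≤ N) (f : Fin N → V) (hf : Bijective f)
    (hadj : ∀ t, G.Adj (f t) (f (t + 1))) :
    ∃ (a : V) (p : G.Walk a a), p.IsHamiltonianCycle := by
  obtain ⟨n, rfl⟩ : ∃ n, N = n + 3 := ⟨N - 3, by omega⟩
  let φ : cycleGraph (n + 3) →g G := ⟨f, fun {u v} huv => by
    rcases cycleGraph_adj.mp huv with h | h
    · rw [sub_eq_iff_eq_add'.mp h]; exact (hadj v).symm
    · rw [sub_eq_iff_eq_add'.mp h]; exact hadj u⟩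
  exact ⟨_, _, (cycleGraph.isHamiltonianCycle_cycle n).map (f := φ) hf⟩

def binaryDigits (B t : ℕ) : Fin B → Bool := fun i => t.testBit i

theorem binaryDigits_injOn (B : ℕ) : Set.InjOn (binaryDigits B) (Set.Iio (2 ^ B)) := by
  intro s hs t ht h
  refine Nat.eq_of_testBit_eq fun i => ?_
  by_cases hi : i < B
  · exact congrFun h ⟨i, hi⟩
  · have hB : 2 ^ B ≤ 2 ^ i := Nat.pow_le_pow_right (by norm_num) (by omega)
    rw [Nat.testBit_lt_two_pow (lt_of_lt_of_le hs hB), Nat.testBit_lt_two_pow (lt_of_lt_of_le ht hB)]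

theorem hypercube_adj_binaryDigits {B s t k : ℕ} (hk : k < B) (h : s ^^^ t = 2 ^ k) :
    (hypercube B).Adj (binaryDigits B s) (binaryDigits B t) := by
  refine hypercube_adj_iff.mpr ⟨⟨k, hk⟩, fun i => ?_⟩
  have := congrArg (Nat.testBit · i) h
  simp only [Nat.testBit_xor, Nat.testBit_two_pow] at this
  simp only [binaryDigits, Fin.ext_iff]
  revert this
  cases s.testBit i <;> cases t.testBit i <;> simp [eq_comm]

theorem hypercube_exists_isHamiltonianCycle {B : ℕ} (hB : 2 ≤ B) :
    ∃ (a : Fin B → Bool) (p : (hypercube B).Walk a a), p.IsHamiltonianCycle := by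
  obtain ⟨C, rfl⟩ : ∃ C, B = C + 1 := ⟨B - 1, by omega⟩
  have h4 : 4 ≤ 2 ^ (C + 1) := by
    calc 4 = 2 ^ 2 := rfl
      _ ≤ 2 ^ (C + 1) := Nat.pow_le_pow_right (by norm_num) hB
  refine exists_isHamiltonianCycle_of_adj_add_one (N := 2 ^ (C + 1)) (by omega)
    (fun t => binaryDigits (C + 1) (Nat.grayCode t)) ?_ fun t => ?_
  · rw [Fintype.bijective_iff_injective_and_card]
    refine ⟨fun s t h => Fin.ext (Nat.grayCode_injective ?_), by simp⟩
    exact binaryDigits_injOn _ (Nat.grayCode_lt_two_pow s.2) (Nat.grayCode_lt_two_pow t.2) h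
  · by_cases ht : t.val + 1 < 2 ^ (C + 1)
    · obtain ⟨k, hk⟩ := Nat.exists_grayCode_xor_grayCode_add_one_eq_two_pow t
      rw [Fin.val_add_one_of_lt' ht]
      refine hypercube_adj_binaryDigits ?_ hk
      have := Nat.xor_lt_two_pow (Nat.grayCode_lt_two_pow t.2) (Nat.grayCode_lt_two_pow ht)
      rw [hk] at this
      exact (Nat.pow_lt_pow_iff_right (by norm_num)).mp this
    · have hlast : t.val = 2 ^ (C + 1) - 1 := by omega
      have hzero : (t + 1).val = 0 := by
        rw [Fin.val_add, Fin.val_one', Nat.one_mod_eq_one.mpr (by omega), hlast,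
          Nat.sub_add_cancel (by omega), Nat.mod_self]
      rw [hlast, hzero, Nat.grayCode_two_pow_sub_one]
      exact hypercube_adj_binaryDigits (k := C) (by omega) (by simp [Nat.grayCode])

end SimpleGraph

theorem bitOf_of_le {n i : ℕ} (u : Fin n → Bool) (h : n ≤ i) : bitOf u i = false := by
  simp [bitOf, Nat.not_lt.mpr h]

theorem bitOf_injective {n : ℕ} : Injective (bitOf (n := n)) :=
  fun u v h => funext fun i => by simpa [bitOf] using congrFun h i

theorem bitOf_comp_val {n : ℕ} (f : ℕ → Bool) (hf : ∀ i, n ≤ i → f i = false) :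
    bitOf (fun i : Fin n => f i) = f := by
  funext i
  by_cases hi : i < n
  · simp [bitOf, hi]
  · simp [bitOf, hi, hf i (by omega)]

theorem bitOf_eq_xor_of_forall_ne_iff {B : ℕ} {x y : Fin B → Bool} {k : Fin B}
    (h : ∀ i, x i ≠ y i ↔ i = k) : bitOf y = fun p => (bitOf x p ^^ decide (p = k)) := by
  funext p
  by_cases hp : p < B
  · have := h ⟨p, hp⟩
    simp only [bitOf, hp, dite_true, Fin.ext_iff] at this ⊢
    revert this
    cases x ⟨p, hp⟩ <;> cases y ⟨p, hp⟩ <;> simp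
  · simp only [bitOf, hp, ↓reduceDIte, Bool.false_bne, false_eq_decide_iff]
    omega

theorem cube_index_cases (k : ℕ) :
    k < 2 ∨ ∃ j, 1 ≤ j ∧ (k = 3 * j - 1 ∨ k = 3 * j ∨ k = 3 * j + 1) := by
  by_cases hk : k < 2
  · exact Or.inl hk
  · exact Or.inr ⟨(k + 1) / 3, by omega, by omega⟩

theorem ssq_index_cases (i : ℕ) :
    i < 2 ∨ ∃ j, 1 ≤ j ∧ (i = 4 * j - 2 ∨ i = 4 * j - 1 ∨ i = 4 * j ∨ i = 4 * j + 1) := by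
  by_cases hi : i < 2
  · exact Or.inl hi
  · exact Or.inr ⟨(i + 2) / 4, by omega, by omega⟩

-- Bit `i ≥ 2` of an SSQ vertex lies in block `(i + 2) / 4`, coordinate `k ≥ 2` of the cube in
-- block `(k + 1) / 3`.
def cubeToSSQBits (x : ℕ → Bool) (i : ℕ) : Bool :=
  if i < 2 then x i
  else if (i + 2) % 4 = 0 then x (3 * ((i + 2) / 4) - 1) ^^ x (3 * ((i + 2) / 4) + 1)
  else if (i + 2) % 4 = 1 then x (3 * ((i + 2) / 4)) ^^ x (3 * ((i + 2) / 4) + 1)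
  else x (3 * ((i + 2) / 4) + 1)

def ssqToCubeBits (u : ℕ → Bool) (k : ℕ) : Bool :=
  if k < 2 then u k
  else if (k + 1) % 3 = 0 then u (4 * ((k + 1) / 3) - 2) ^^ u (4 * ((k + 1) / 3))
  else if (k + 1) % 3 = 1 then u (4 * ((k + 1) / 3) - 1) ^^ u (4 * ((k + 1) / 3))
  else u (4 * ((k + 1) / 3))

section Evaluation

variable (x : ℕ → Bool) {i j : ℕ}

@[simp]
theorem cubeToSSQBits_of_lt_two (hi : i < 2) : cubeToSSQBits x i = x i := by
  rw [cubeToSSQBits, if_pos hi]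

@[simp]
theorem cubeToSSQBits_four_mul_sub_two (hj : 1 ≤ j) :
    cubeToSSQBits x (4 * j - 2) = (x (3 * j - 1) ^^ x (3 * j + 1)) := by
  rw [cubeToSSQBits, if_neg (by omega), if_pos (by omega), show (4 * j - 2 + 2) / 4 = j by omega]

@[simp]
theorem cubeToSSQBits_four_mul_sub_one (hj : 1 ≤ j) :
    cubeToSSQBits x (4 * j - 1) = (x (3 * j) ^^ x (3 * j + 1)) := by
  rw [cubeToSSQBits, if_neg (by omega), if_neg (by omega), if_pos (by omega),
    show (4 * j - 1 + 2) / 4 = j by omega]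

@[simp]
theorem cubeToSSQBits_four_mul (hj : 1 ≤ j) : cubeToSSQBits x (4 * j) = x (3 * j + 1) := by
  rw [cubeToSSQBits, if_neg (by omega), if_neg (by omega), if_neg (by omega),
    show (4 * j + 2) / 4 = j by omega]

@[simp]
theorem cubeToSSQBits_four_mul_add_one (hj : 1 ≤ j) :
    cubeToSSQBits x (4 * j + 1) = x (3 * j + 1) := by
  rw [cubeToSSQBits, if_neg (by omega), if_neg (by omega), if_neg (by omega),
    show (4 * j + 1 + 2) / 4 = j by omega]

@[simp]
theorem ssqToCubeBits_of_lt_two (hi : i < 2) : ssqToCubeBits x i = x i := by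
  rw [ssqToCubeBits, if_pos hi]

@[simp]
theorem ssqToCubeBits_three_mul_sub_one (hj : 1 ≤ j) :
    ssqToCubeBits x (3 * j - 1) = (x (4 * j - 2) ^^ x (4 * j)) := by
  rw [ssqToCubeBits, if_neg (by omega), if_pos (by omega), show (3 * j - 1 + 1) / 3 = j by omega]

@[simp]
theorem ssqToCubeBits_three_mul (hj : 1 ≤ j) :
    ssqToCubeBits x (3 * j) = (x (4 * j - 1) ^^ x (4 * j)) := by
  rw [ssqToCubeBits, if_neg (by omega), if_neg (by omega), if_pos (by omega),
    show (3 * j + 1) / 3 = j by omega]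

@[simp]
theorem ssqToCubeBits_three_mul_add_one (hj : 1 ≤ j) :
    ssqToCubeBits x (3 * j + 1) = x (4 * j) := by
  rw [ssqToCubeBits, if_neg (by omega), if_neg (by omega), if_neg (by omega),
    show (3 * j + 1 + 1) / 3 = j by omega]

end Evaluation

theorem ssqToCubeBits_cubeToSSQBits (x : ℕ → Bool) : ssqToCubeBits (cubeToSSQBits x) = x := by
  funext k
  rcases cube_index_cases k with hk | ⟨j, hj, rfl | rfl | rfl⟩ <;> simp [*]

theorem cubeToSSQBits_ssqToCubeBits (u : ℕ → Bool)
    (hu : ∀ j, 1 ≤ j → u (4 * j + 1) = u (4 * j)) : cubeToSSQBits (ssqToCubeBits u) = u := by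
  funext i
  rcases ssq_index_cases i with hi | ⟨j, hj, rfl | rfl | rfl | rfl⟩ <;> simp [*]

theorem cubeToSSQBits_bitOf_of_le {m i : ℕ} (x : Fin (3 * m + 2) → Bool) (hi : 4 * m + 2 ≤ i) :
    cubeToSSQBits (bitOf x) i = false := by
  rcases ssq_index_cases i with h | ⟨j, hj, rfl | rfl | rfl | rfl⟩
  · omega
  all_goals simp [hj, bitOf_of_le x (by omega : 3 * m + 2 ≤ 3 * j - 1),
    bitOf_of_le x (by omega : 3 * m + 2 ≤ 3 * j), bitOf_of_le x (by omega : 3 * m + 2 ≤ 3 * j + 1)]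

theorem ssqToCubeBits_bitOf_of_le {m k : ℕ} (u : Fin (4 * m + 2) → Bool) (hk : 3 * m + 2 ≤ k) :
    ssqToCubeBits (bitOf u) k = false := by
  rcases cube_index_cases k with h | ⟨j, hj, rfl | rfl | rfl⟩
  · omega
  all_goals simp [hj, bitOf_of_le u (by omega : 4 * m + 2 ≤ 4 * j - 2),
    bitOf_of_le u (by omega : 4 * m + 2 ≤ 4 * j - 1), bitOf_of_le u (by omega : 4 * m + 2 ≤ 4 * j)]

def cubeEquivSSQ (m : ℕ) : (Fin (3 * m + 2) → Bool) ≃ SSQVert (4 * m + 2) where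
  toFun x := ⟨fun i => cubeToSSQBits (bitOf x) i, fun j hj _ => by
    rw [bitOf_comp_val _ fun _ => cubeToSSQBits_bitOf_of_le x, cubeToSSQBits_four_mul_add_one _ hj,
      cubeToSSQBits_four_mul _ hj]⟩
  invFun u k := ssqToCubeBits (bitOf u.1) k
  left_inv x := bitOf_injective <| by
    dsimp only
    rw [bitOf_comp_val _ fun _ => ssqToCubeBits_bitOf_of_le _,
      bitOf_comp_val _ fun _ => cubeToSSQBits_bitOf_of_le x, ssqToCubeBits_cubeToSSQBits]
  right_inv u := Subtype.ext <| bitOf_injective <| by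
    dsimp only
    rw [bitOf_comp_val _ fun _ => cubeToSSQBits_bitOf_of_le _,
      bitOf_comp_val _ fun _ => ssqToCubeBits_bitOf_of_le _]
    refine cubeToSSQBits_ssqToCubeBits _ fun j hj => ?_
    by_cases hjm : j ≤ m
    · exact u.2 j hj (by omega)
    · rw [bitOf_of_le _ (by omega), bitOf_of_le _ (by omega)]

theorem bitOf_cubeEquivSSQ {m : ℕ} (x : Fin (3 * m + 2) → Bool) :
    bitOf (cubeEquivSSQ m x).1 = cubeToSSQBits (bitOf x) :=
  bitOf_comp_val _ fun _ => cubeToSSQBits_bitOf_of_le x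

theorem ssqRel_cubeEquivSSQ {m : ℕ} {x y : Fin (3 * m + 2) → Bool}
    (h : (SimpleGraph.hypercube (3 * m + 2)).Adj x y) :
    ssqRel (cubeEquivSSQ m x) (cubeEquivSSQ m y) := by
  obtain ⟨k, hk⟩ := SimpleGraph.hypercube_adj_iff.mp h
  simp only [ssqRel, lowRel, blockAgree, bitOf_cubeEquivSSQ, bitOf_eq_xor_of_forall_ne_iff hk]
  have hkm := k.2
  generalize (k : ℕ) = k at *
  rcases cube_index_cases k with hk2 | ⟨j, hj, hkj⟩
  · refine Or.inl ⟨k, hk2, by simp [hk2], fun p hp => ?_⟩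
    rcases ssq_index_cases p with hp2 | ⟨j, hj, rfl | rfl | rfl | rfl⟩
    all_goals simp (disch := omega) [decide_eq_false]
  · refine Or.inr ⟨j, hj, by omega, fun p hp => ?_, ?_⟩
    · rcases ssq_index_cases p with hp2 | ⟨j, hj, rfl | rfl | rfl | rfl⟩
      all_goals simp (disch := omega) [decide_eq_false]
    · rcases hkj with rfl | rfl | rfl
      all_goals simp (disch := omega) [decide_eq_false, inV00]

theorem SSQ_adj_cubeEquivSSQ {m : ℕ} {x y : Fin (3 * m + 2) → Bool}
    (h : (SimpleGraph.hypercube (3 * m + 2)).Adj x y) :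
    (SSQ (4 * m + 2)).Adj (cubeEquivSSQ m x) (cubeEquivSSQ m y) :=
  (SimpleGraph.fromRel_adj _ _ _).mpr
    ⟨(cubeEquivSSQ m).injective.ne h.ne, Or.inl (ssqRel_cubeEquivSSQ h)⟩

theorem SSQ_hamiltonian_general (n : ℕ) (hn : n % 4 = 2) :
    ∃ (a : SSQVert n) (p : (SSQ n).Walk a a), p.IsHamiltonianCycle := by
  obtain ⟨m, rfl⟩ : ∃ m, n = 4 * m + 2 := ⟨n / 4, by omega⟩
  obtain ⟨a, p, hp⟩ := SimpleGraph.hypercube_exists_isHamiltonianCycle (B := 3 * m + 2) (by omega)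
  let φ : SimpleGraph.hypercube (3 * m + 2) →g SSQ (4 * m + 2) :=
    ⟨cubeEquivSSQ m, SSQ_adj_cubeEquivSSQ⟩
  exact ⟨_, p.map φ, hp.map (cubeEquivSSQ m).bijective⟩

/-- For every `n ≡ 2 (mod 4)` with `n > 2`, the simplified shuffle-cube `SSQ_n`
contains a Hamiltonian cycle. -/
theorem SSQ_hamiltonian (n : ℕ) (hn : n % 4 = 2) (hn2 : 2 < n) :
    ∃ (a : SSQVert n) (p : (SSQ n).Walk a a), p.IsHamiltonianCycle :=
  SSQ_hamiltonian_general n hn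
end

section
/- For every n ≡ 2 (mod 4) with n > 2, the balanced shuffle-cube BSQ_n is vertex-transitive: for each pair of vertices u, v of BSQ_n there exists a graph automorphism of BSQ_n mapping u to v. -/
/-- The pair of bits `u_{i+1} u_i` read as an integer in `{0,1,2,3}` (an element of `ZMod 4`). -/
def pairVal {n : ℕ} (u : Fin n → Bool) (i : ℕ) : ZMod 4 :=
  ((2 * (bitOf u (i+1)).toNat + (bitOf u i).toNat : ℕ) : ZMod 4)

def bsqRel {n : ℕ} (u v : Fin n → Bool) : Prop :=
  lowRel u v ∨ ∃ j, 1 ≤ j ∧ j ≤ (n-2)/4 ∧ blockAgree u v j ∧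
    (pairVal v (4*j) = pairVal u (4*j) + 1 ∨ pairVal v (4*j) = pairVal u (4*j) - 1) ∧
    (pairVal v (4*j-2) = pairVal u (4*j-2) + (if bitOf u (4*j) then -1 else 1) ∨
      pairVal v (4*j-2) = pairVal u (4*j-2))

/-- The `n`-dimensional balanced shuffle-cube `BSQ_n`. -/
def BSQ (n : ℕ) : SimpleGraph (Fin n → Bool) := SimpleGraph.fromRel bsqRel

def bit0Of (x : ZMod 4) : Bool := decide (x.val % 2 = 1)
def bit1Of (x : ZMod 4) : Bool := decide (x.val / 2 = 1)
def epsF (x : ZMod 4) : ZMod 4 := if x.val % 2 = 1 then -1 else 1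
lemma recon4 : ∀ x : ZMod 4, ((2 * (bit1Of x).toNat + (bit0Of x).toNat : ℕ) : ZMod 4) = x := by decide
lemma epsF_range : ∀ x : ZMod 4, epsF x = 1 ∨ epsF x = -1 := by decide
lemma epsF_neg_mul : ∀ e t : ZMod 4, (e = 1 ∨ e = -1) → epsF (-(e*t)) = epsF t := by decide
set_option maxHeartbeats 1000000 in
lemma key4 : ∀ (ea eb ta tb a b a' b' : ZMod 4),
    (ea = 1 ∨ ea = -1) → (eb = 1 ∨ eb = -1) → eb = epsF ta →
    (a' = a + 1 ∨ a' = a - 1) → (b' = b + epsF a ∨ b' = b) →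
    ((ea*a'+ta = ea*a+ta + 1 ∨ ea*a'+ta = ea*a+ta - 1) ∧
     (eb*b'+tb = eb*b+tb + epsF (ea*a+ta) ∨ eb*b'+tb = eb*b+tb)) := by decide
lemma aff_inv : ∀ e t x : ZMod 4, (e = 1 ∨ e = -1) → e * (e * x + t) + -(e*t) = x := by decide
lemma bit0_pairVal {n} (w : Fin n → Bool) (p : ℕ) : bit0Of (pairVal w p) = bitOf w p := by
  cases h1 : bitOf w (p+1) <;> cases h0 : bitOf w p <;> simp [pairVal, h1, h0] <;> decide
lemma bit1_pairVal {n} (w : Fin n → Bool) (p : ℕ) : bit1Of (pairVal w p) = bitOf w (p+1) := by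
  cases h1 : bitOf w (p+1) <;> cases h0 : bitOf w p <;> simp [pairVal, h1, h0] <;> decide
lemma eps_pairVal {n} (w : Fin n → Bool) (p : ℕ) :
    (if bitOf w p then (-1 : ZMod 4) else 1) = epsF (pairVal w p) := by
  have h : ∀ x : ZMod 4, (if bit0Of x then (-1 : ZMod 4) else 1) = epsF x := by decide
  rw [← bit0_pairVal w p, h]
lemma pairVal_congr {n} {w w' : Fin n → Bool} {p : ℕ}
    (h0 : bitOf w p = bitOf w' p) (h1 : bitOf w (p+1) = bitOf w' (p+1)) :
    pairVal w p = pairVal w' p := by simp [pairVal, h0, h1]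
lemma bitOf_fin {n} (w : Fin n → Bool) (i : Fin n) : bitOf w i.val = w i := by
  simp [bitOf]

def phiMap {n : ℕ} (mask : ℕ → Bool) (e t : ℕ → ZMod 4) (w : Fin n → Bool) : Fin n → Bool :=
  fun i =>
    if i.val < 2 then xor (bitOf w i.val) (mask i.val)
    else if i.val % 2 = 0 then
      bit0Of (e (2*(i.val/2)) * pairVal w (2*(i.val/2)) + t (2*(i.val/2)))
    else
      bit1Of (e (2*(i.val/2)) * pairVal w (2*(i.val/2)) + t (2*(i.val/2)))

variable {n : ℕ} {mask : ℕ → Bool} {e t : ℕ → ZMod 4} {w w' : Fin n → Bool}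

lemma bitOf_phi_low (k : ℕ) (hk : k < 2) (hkn : k < n) :
    bitOf (phiMap mask e t w) k = xor (bitOf w k) (mask k) := by
  simp [bitOf, hkn, phiMap, hk]
lemma bitOf_phi_even (p : ℕ) (hp : p % 2 = 0) (h2 : 2 ≤ p) (hpn : p < n) :
    bitOf (phiMap mask e t w) p = bit0Of (e p * pairVal w p + t p) := by
  have h : 2*(p/2) = p := by omega
  simp [bitOf, hpn, phiMap, h, hp]; omega
lemma bitOf_phi_odd (p : ℕ) (hp : p % 2 = 0) (h2 : 2 ≤ p) (hpn : p + 1 < n) :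
    bitOf (phiMap mask e t w) (p+1) = bit1Of (e p * pairVal w p + t p) := by
  have h : 2*((p+1)/2) = p := by omega
  have h1 : (p+1) % 2 = 1 := by omega
  simp [bitOf, hpn, phiMap, h, h1]; omega
lemma pairVal_phi (p : ℕ) (hp : p % 2 = 0) (h2 : 2 ≤ p) (hpn : p + 1 < n) :
    pairVal (phiMap mask e t w) p = e p * pairVal w p + t p := by
  rw [pairVal, bitOf_phi_odd p hp h2 hpn, bitOf_phi_even p hp h2 (by omega), recon4]

lemma bitOf_phi_congr (k : ℕ) (hk : 2 ≤ k)
    (h : ∀ m, 2*(k/2) ≤ m → m ≤ 2*(k/2)+1 → bitOf w m = bitOf w' m) :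
    bitOf (phiMap mask e t w) k = bitOf (phiMap mask e t w') k := by
  by_cases hkn : k < n
  · set p := 2*(k/2) with hp
    have hpe : p % 2 = 0 := by omega
    have hp2 : 2 ≤ p := by omega
    have hpv : pairVal w p = pairVal w' p :=
      pairVal_congr (h p (by omega) (by omega)) (h (p+1) (by omega) (by omega))
    rcases Nat.mod_two_eq_zero_or_one k with he' | ho
    · have hkp : k = p := by omega
      rw [hkp, bitOf_phi_even p hpe hp2 (by omega), bitOf_phi_even p hpe hp2 (by omega), hpv]
    · have hkp : k = p + 1 := by omega
      rw [hkp, bitOf_phi_odd p hpe hp2 (by omega), bitOf_phi_odd p hpe hp2 (by omega), hpv]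
  · simp [bitOf, hkn]

lemma phi_leftInv (hn2 : n % 2 = 0) (he : ∀ p, e p = 1 ∨ e p = -1) (w : Fin n → Bool) :
    phiMap mask e (fun p => -(e p * t p)) (phiMap mask e t w) = w := by
  funext i
  by_cases hi : i.val < 2
  · have h1 := bitOf_phi_low (mask := mask) (e := e) (t := fun p => -(e p * t p))
      (w := phiMap mask e t w) i.val hi i.isLt
    have h2 := bitOf_phi_low (mask := mask) (e := e) (t := t) (w := w) i.val hi i.isLt
    rw [bitOf_fin] at h1
    rw [h1, h2, ← bitOf_fin w i]
    cases bitOf w i.val <;> cases mask i.val <;> rfl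
  · set p := 2*(i.val/2) with hp
    have hpe : p % 2 = 0 := by omega
    have hp2 : 2 ≤ p := by omega
    have hin : i.val < n := i.isLt
    have hpn : p + 1 < n := by omega
    have hpv : pairVal (phiMap mask e t w) p = e p * pairVal w p + t p :=
      pairVal_phi p hpe hp2 hpn
    have haff : e p * (e p * pairVal w p + t p) + -(e p * t p) = pairVal w p :=
      aff_inv _ _ _ (he p)
    suffices h : bitOf (phiMap mask e (fun p => -(e p * t p)) (phiMap mask e t w)) i.val
        = bitOf w i.val by
      rw [bitOf_fin, bitOf_fin] at h; exact h
    rcases Nat.mod_two_eq_zero_or_one i.val with hev | hod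
    · have hkp : i.val = p := by omega
      have h1 := bitOf_phi_even (mask := mask) (e := e) (t := fun p => -(e p * t p))
        (w := phiMap mask e t w) p hpe hp2 (by omega)
      rw [hkp, h1, hpv, haff, bit0_pairVal]
    · have hkp : i.val = p + 1 := by omega
      have h1 := bitOf_phi_odd (mask := mask) (e := e) (t := fun p => -(e p * t p))
        (w := phiMap mask e t w) p hpe hp2 hpn
      rw [hkp, h1, hpv, haff, bit1_pairVal]

lemma lowRel_map (h2 : 2 < n) (hl : lowRel w w') :
    lowRel (phiMap mask e t w) (phiMap mask e t w') := by
  obtain ⟨i, hi2, hne, hag⟩ := hl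
  refine ⟨i, hi2, ?_, ?_⟩
  · rw [bitOf_phi_low i hi2 (by omega), bitOf_phi_low i hi2 (by omega)]
    cases mask i <;> simpa using hne
  · intro k hk
    by_cases hk2 : k < 2
    · by_cases hkn : k < n
      · rw [bitOf_phi_low k hk2 hkn, bitOf_phi_low k hk2 hkn, hag k hk]
      · simp [bitOf, hkn]
    · exact bitOf_phi_congr k (by omega)
        (fun m h1 h2 => hag m (by omega))

lemma bsqRel_map (h2 : 2 < n) (hn4 : n % 4 = 2) (he : ∀ p, e p = 1 ∨ e p = -1)
    (hc : ∀ p, p % 4 = 0 → 2 ≤ p → e (p - 2) = epsF (t p)) (h : bsqRel w w') :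
    bsqRel (phiMap mask e t w) (phiMap mask e t w') := by
  rcases h with hl | ⟨j, hj1, hj2, hag, ha, hb⟩
  · exact Or.inl (lowRel_map h2 hl)
  · have hjn : 4*j + 1 < n := by omega
    have hpa : (4*j) % 2 = 0 := by omega
    have hpb : (4*j-2) % 2 = 0 := by omega
    have hb2 : 2 ≤ 4*j - 2 := by omega
    have hbn : (4*j-2) + 1 < n := by omega
    have hbb : (4*j-2) + 1 + 1 = 4*j := by omega
    refine Or.inr ⟨j, hj1, hj2, ?_, ?_⟩
    · intro k hk
      by_cases hk2 : k < 2
      · by_cases hkn : k < n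
        · rw [bitOf_phi_low k hk2 hkn, bitOf_phi_low k hk2 hkn, hag k hk]
        · simp [bitOf, hkn]
      · exact bitOf_phi_congr k (by omega)
          (fun m h1 h2 => hag m (by omega))
    · rw [pairVal_phi (4*j) hpa (by omega) hjn,
          pairVal_phi (4*j) hpa (by omega) hjn,
          pairVal_phi (4*j-2) hpb hb2 hbn,
          pairVal_phi (4*j-2) hpb hb2 hbn,
          eps_pairVal (phiMap mask e t w) (4*j), pairVal_phi (4*j) hpa (by omega) hjn]
      rw [eps_pairVal w (4*j)] at hb
      have hcc : e (4*j - 2) = epsF (t (4*j)) := hc (4*j) (by omega) (by omega)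
      exact key4 (e (4*j)) (e (4*j-2)) (t (4*j)) (t (4*j-2))
        (pairVal w (4*j)) (pairVal w (4*j-2)) (pairVal w' (4*j)) (pairVal w' (4*j-2))
        (he _) (he _) hcc ha hb


def eFun {n : ℕ} (u v : Fin n → Bool) (p : ℕ) : ZMod 4 :=
  if p % 4 = 0 then 1 else epsF (pairVal v (p+2) - pairVal u (p+2))

def tFun {n : ℕ} (u v : Fin n → Bool) (p : ℕ) : ZMod 4 :=
  pairVal v p - eFun u v p * pairVal u p

/-- For every `n ≡ 2 (mod 4)` with `n > 2`, the balanced shuffle-cube `BSQ_n`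
is vertex-transitive. -/
theorem BSQ_vertexTransitive (n : ℕ) (hn : n % 4 = 2) (hn2 : 2 < n) :
    ∀ u v : Fin n → Bool, ∃ φ : BSQ n ≃g BSQ n, φ u = v := by
  intro u v
  set mask : ℕ → Bool := fun k => xor (bitOf u k) (bitOf v k) with hmask
  set e : ℕ → ZMod 4 := eFun u v with hedef
  set t : ℕ → ZMod 4 := tFun u v with htdef
  have he : ∀ p, e p = 1 ∨ e p = -1 := by
    intro p
    by_cases h : p % 4 = 0
    · left; simp [hedef, eFun, h]
    · simp only [hedef, eFun, if_neg h]; exact epsF_range _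
  have hc : ∀ p, p % 4 = 0 → 2 ≤ p → e (p - 2) = epsF (t p) := by
    intro p hp h2
    have h1 : (p - 2) % 4 ≠ 0 := by omega
    have h3 : p - 2 + 2 = p := by omega
    have h4 : t p = pairVal v p - pairVal u p := by
      simp only [htdef, tFun, hedef, eFun, if_pos hp]; ring
    simp only [hedef, eFun, if_neg h1, h3, h4]
  set t' : ℕ → ZMod 4 := fun p => -(e p * t p) with ht'
  have hc' : ∀ p, p % 4 = 0 → 2 ≤ p → e (p - 2) = epsF (t' p) := by
    intro p hp h2
    rw [ht']
    rw [epsF_neg_mul _ _ (he p)]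
    exact hc p hp h2
  have hnn2 : n % 2 = 0 := by omega
  have htt : (fun p => -(e p * t' p)) = t := by
    funext p
    rcases he p with h | h <;> simp [ht', h]
  set E : (Fin n → Bool) ≃ (Fin n → Bool) :=
    { toFun := phiMap mask e t
      invFun := phiMap mask e t'
      left_inv := phi_leftInv hnn2 he
      right_inv := by
        intro w
        have := phi_leftInv (mask := mask) (t := t') hnn2 he w
        rwa [htt] at this } with hE
  have hmapfwd : ∀ w w', bsqRel w w' → bsqRel (phiMap mask e t w) (phiMap mask e t w') :=
    fun w w' h => bsqRel_map hn2 hn he hc h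
  have hmapbwd : ∀ w w', bsqRel w w' → bsqRel (phiMap mask e t' w) (phiMap mask e t' w') :=
    fun w w' h => bsqRel_map hn2 hn he hc' h
  refine ⟨⟨E, ?_⟩, ?_⟩
  · intro a b
    simp only [BSQ, SimpleGraph.fromRel_adj]
    constructor
    · rintro ⟨hne, h⟩
      refine ⟨fun hab => hne (by rw [hab]), ?_⟩
      have hla : phiMap mask e t' (phiMap mask e t a) = a := phi_leftInv hnn2 he a
      have hlb : phiMap mask e t' (phiMap mask e t b) = b := phi_leftInv hnn2 he b
      have hEa : (E a : Fin n → Bool) = phiMap mask e t a := rfl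
      have hEb : (E b : Fin n → Bool) = phiMap mask e t b := rfl
      rw [hEa, hEb] at h
      rcases h with h | h
      · left; have := hmapbwd _ _ h
        rwa [hla, hlb] at this
      · right; have := hmapbwd _ _ h
        rwa [hlb, hla] at this
    · rintro ⟨hne, h⟩
      refine ⟨fun hab => hne (E.injective hab), ?_⟩
      rcases h with h | h
      · exact Or.inl (hmapfwd _ _ h)
      · exact Or.inr (hmapfwd _ _ h)
  · show phiMap mask e t u = v
    funext i
    suffices h : bitOf (phiMap mask e t u) i.val = bitOf v i.val by
      rw [bitOf_fin, bitOf_fin] at h; exact h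
    by_cases hi : i.val < 2
    · rw [bitOf_phi_low i.val hi i.isLt]
      show (bitOf u i.val ^^ (bitOf u i.val ^^ bitOf v i.val)) = bitOf v i.val
      cases bitOf u i.val <;> cases bitOf v i.val <;> rfl
    · set p := 2*(i.val/2) with hp
      have hpe : p % 2 = 0 := by omega
      have hp2 : 2 ≤ p := by omega
      have hpn : p + 1 < n := by
        have := i.isLt; omega
      have hX : e p * pairVal u p + t p = pairVal v p := by
        rw [htdef]; show e p * pairVal u p + (pairVal v p - e p * pairVal u p) = _; ring
      rcases Nat.mod_two_eq_zero_or_one i.val with hev | hod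
      · have hkp : i.val = p := by omega
        rw [hkp, bitOf_phi_even p hpe hp2 (by omega), hX, bit0_pairVal]
      · have hkp : i.val = p + 1 := by omega
        rw [hkp, bitOf_phi_odd p hpe hp2 hpn, hX, bit1_pairVal]
end

section
/- For every n ≡ 2 (mod 4) with n ≥ 2, the balanced shuffle-cube BSQ_n is an n-regular bipartite graph with exactly 2^n vertices. -/
namespace BSQaux

variable {n : ℕ}

lemma bitOf_fin (u : Fin n → Bool) (k : Fin n) : bitOf u k.1 = u k := by
  simp [bitOf, k.2]

lemma eq_of_bitOf_eq {u w : Fin n → Bool} (h : ∀ k : ℕ, bitOf u k = bitOf w k) : u = w :=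
  funext fun k => by rw [← bitOf_fin u k, ← bitOf_fin w k]; exact h k.1

def lowBit (a : ZMod 4) : Bool := decide (a.val % 2 = 1)
def highBit (a : ZMod 4) : Bool := decide (2 ≤ a.val)

lemma pair_round (a : ZMod 4) :
    ((2 * (highBit a).toNat + (lowBit a).toNat : ℕ) : ZMod 4) = a := by revert a; decide

lemma pair_inj {b1 b0 c1 c0 : Bool}
    (h : ((2 * c1.toNat + c0.toNat : ℕ) : ZMod 4) = ((2 * b1.toNat + b0.toNat : ℕ) : ZMod 4)) :
    c1 = b1 ∧ c0 = b0 := by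
  revert h; rcases b1 <;> rcases b0 <;> rcases c1 <;> rcases c0 <;> decide

lemma pair_flip {b1 b0 c1 c0 : Bool}
    (h : ((2 * c1.toNat + c0.toNat : ℕ) : ZMod 4) = ((2 * b1.toNat + b0.toNat : ℕ) : ZMod 4) + 1 ∨
         ((2 * c1.toNat + c0.toNat : ℕ) : ZMod 4) = ((2 * b1.toNat + b0.toNat : ℕ) : ZMod 4) - 1) :
    c0 = !b0 := by
  revert h; rcases b1 <;> rcases b0 <;> rcases c1 <;> rcases c0 <;> decide

lemma pairVal_inj {u w : Fin n → Bool} {i : ℕ} (h : pairVal u i = pairVal w i) :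
    bitOf u (i+1) = bitOf w (i+1) ∧ bitOf u i = bitOf w i :=
  pair_inj (by simpa [pairVal] using h)

lemma bitOf_flip_of_pair {u v : Fin n → Bool} {i : ℕ}
    (h : pairVal v i = pairVal u i + 1 ∨ pairVal v i = pairVal u i - 1) :
    bitOf v i = ! bitOf u i :=
  pair_flip (by simpa [pairVal] using h)

lemma pairVal_congr {u w : Fin n → Bool} {i : ℕ} (h0 : bitOf u i = bitOf w i)
    (h1 : bitOf u (i+1) = bitOf w (i+1)) : pairVal u i = pairVal w i := by
  simp [pairVal, h0, h1]

def setPair (u : Fin n → Bool) (i : ℕ) (a : ZMod 4) : Fin n → Bool := fun k =>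
  if k.1 = i then lowBit a else if k.1 = i + 1 then highBit a else u k

lemma bitOf_setPair_out (u : Fin n → Bool) (i : ℕ) (a : ZMod 4) {k : ℕ}
    (h1 : k ≠ i) (h2 : k ≠ i + 1) : bitOf (setPair u i a) k = bitOf u k := by
  by_cases hk : k < n <;> simp [bitOf, setPair, hk, h1, h2]

lemma bitOf_setPair_low (u : Fin n → Bool) {i : ℕ} (a : ZMod 4) (h : i < n) :
    bitOf (setPair u i a) i = lowBit a := by
  simp [bitOf, setPair, h]

lemma bitOf_setPair_high (u : Fin n → Bool) {i : ℕ} (a : ZMod 4) (h : i + 1 < n) :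
    bitOf (setPair u i a) (i+1) = highBit a := by
  have : i + 1 ≠ i := by omega
  simp [bitOf, setPair, h, this]

lemma pairVal_setPair (u : Fin n → Bool) {i : ℕ} (a : ZMod 4) (h : i + 1 < n) :
    pairVal (setPair u i a) i = a := by
  rw [pairVal, bitOf_setPair_low u a (by omega), bitOf_setPair_high u a h, pair_round]


def flipBit (v : Fin n → Bool) (i : ℕ) : Fin n → Bool := fun k =>
  if k.1 = i then ! v k else v k

lemma bitOf_flipBit_self (v : Fin n → Bool) {i : ℕ} (h : i < n) :
    bitOf (flipBit v i) i = ! bitOf v i := by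
  simp [bitOf, flipBit, h]

lemma bitOf_flipBit_ne (v : Fin n → Bool) {i k : ℕ} (h : k ≠ i) :
    bitOf (flipBit v i) k = bitOf v k := by
  by_cases hk : k < n <;> simp [bitOf, flipBit, hk, h]

def eps (v : Fin n → Bool) (j : ℕ) : ZMod 4 := if bitOf v (4*j) then -1 else 1

def blockNbr (v : Fin n → Bool) (j : ℕ) (s t : Bool) : Fin n → Bool :=
  setPair (setPair v (4*j) (pairVal v (4*j) + (if s then 1 else -1)))
    (4*j-2) (pairVal v (4*j-2) + (if t then eps v j else 0))

lemma bitOf_blockNbr_out (v : Fin n → Bool) {j : ℕ} (s t : Bool) (hj : 1 ≤ j) {k : ℕ}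
    (hk : k < 4*j - 2 ∨ 4*j + 1 < k) :
    bitOf (blockNbr v j s t) k = bitOf v k := by
  unfold blockNbr
  rw [bitOf_setPair_out _ _ _ (by omega) (by omega),
      bitOf_setPair_out _ _ _ (by omega) (by omega)]

lemma pairVal_blockNbr_low (v : Fin n → Bool) {j : ℕ} (s t : Bool) (hj : 1 ≤ j)
    (hjn : 4*j + 1 < n) :
    pairVal (blockNbr v j s t) (4*j-2) = pairVal v (4*j-2) + (if t then eps v j else 0) := by
  unfold blockNbr
  exact pairVal_setPair _ _ (by omega)

lemma pairVal_blockNbr_up (v : Fin n → Bool) {j : ℕ} (s t : Bool) (hj : 1 ≤ j)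
    (hjn : 4*j + 1 < n) :
    pairVal (blockNbr v j s t) (4*j) = pairVal v (4*j) + (if s then 1 else -1) := by
  unfold blockNbr
  calc pairVal (setPair (setPair v (4*j) (pairVal v (4*j) + (if s then 1 else -1)))
        (4*j-2) (pairVal v (4*j-2) + (if t then eps v j else 0))) (4*j)
      = pairVal (setPair v (4*j) (pairVal v (4*j) + (if s then 1 else -1))) (4*j) :=
        pairVal_congr
          (bitOf_setPair_out _ _ _ (show 4*j ≠ 4*j-2 by omega) (show 4*j ≠ 4*j-2+1 by omega))
          (bitOf_setPair_out _ _ _ (show 4*j+1 ≠ 4*j-2 by omega) (show 4*j+1 ≠ 4*j-2+1 by omega))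
    _ = pairVal v (4*j) + (if s then 1 else -1) := pairVal_setPair _ _ (by omega)

lemma pairVal_blockNbr_up' (v : Fin n → Bool) {j : ℕ} (s t : Bool) (hj : 1 ≤ j)
    (hjn : 4*j + 1 < n) :
    pairVal (blockNbr v j s t) (4*j) = pairVal v (4*j) + 1 ∨
      pairVal (blockNbr v j s t) (4*j) = pairVal v (4*j) - 1 := by
  rcases s with _ | _
  · right; rw [pairVal_blockNbr_up v false t hj hjn]; simp [sub_eq_add_neg]
  · left; rw [pairVal_blockNbr_up v true t hj hjn]; simp

lemma bitOf_blockNbr_flip (v : Fin n → Bool) {j : ℕ} (s t : Bool) (hj : 1 ≤ j)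
    (hjn : 4*j + 1 < n) :
    bitOf (blockNbr v j s t) (4*j) = ! bitOf v (4*j) :=
  bitOf_flip_of_pair (pairVal_blockNbr_up' v s t hj hjn)

lemma bsq_blockNbr (v : Fin n → Bool) {j : ℕ} (s t : Bool) (hj : 1 ≤ j)
    (hj2 : j ≤ (n-2)/4) (hjn : 4*j + 1 < n) :
    bsqRel v (blockNbr v j s t) := by
  refine Or.inr ⟨j, hj, hj2, ?_, pairVal_blockNbr_up' v s t hj hjn, ?_⟩
  · intro k hk; exact (bitOf_blockNbr_out v s t hj hk).symm
  · rcases t with _ | _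
    · right; rw [pairVal_blockNbr_low v s false hj hjn]; simp
    · left; rw [pairVal_blockNbr_low v s true hj hjn]; rfl

lemma bsq_flipBit (v : Fin n → Bool) {i : ℕ} (hi : i < 2) (h2 : 2 ≤ n) :
    bsqRel v (flipBit v i) := by
  refine Or.inl ⟨i, hi, ?_, fun k hk => (bitOf_flipBit_ne v hk).symm⟩
  rw [bitOf_flipBit_self v (by omega)]
  simp

lemma bsq_symm {u v : Fin n → Bool} (h : bsqRel u v) : bsqRel v u := by
  rcases h with ⟨i, hi, hne, hall⟩ | ⟨j, hj1, hj2, hag, hup, hlow⟩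
  · exact Or.inl ⟨i, hi, hne.symm, fun k hk => (hall k hk).symm⟩
  · refine Or.inr ⟨j, hj1, hj2, fun k hk => (hag k hk).symm, ?_, ?_⟩
    · rcases hup with h | h
      · right; rw [h]; ring
      · left; rw [h]; ring
    · have hb : bitOf v (4*j) = ! bitOf u (4*j) := bitOf_flip_of_pair hup
      rcases hlow with h | h
      · left; rw [hb, h]
        cases hc : bitOf u (4*j) <;> simp [hc] <;> ring
      · right; exact h.symm


def nbrF (v : Fin n → Bool) : (Fin 2 ⊕ (Fin ((n-2)/4) × Bool × Bool)) → (Fin n → Bool)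
  | .inl i => flipBit v i.1
  | .inr (j, s, t) => blockNbr v (j.1 + 1) s t

lemma nbrF_inj (hn : n % 4 = 2) (v : Fin n → Bool) : Function.Injective (nbrF v) := by
  have h2 : 2 ≤ n := by omega
  rintro (⟨i, hi⟩ | ⟨j, s, t⟩) (⟨i', hi'⟩ | ⟨j', s', t'⟩) h
  · -- inl inl
    rcases eq_or_ne i i' with rfl | hne
    · rfl
    · exfalso
      have hb := congrArg (fun w => bitOf w i) h
      simp only [nbrF] at hb
      rw [bitOf_flipBit_self v (by omega), bitOf_flipBit_ne v hne] at hb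
      simp at hb
  · -- inl inr
    exfalso
    have hb := congrArg (fun w => bitOf w i) h
    simp only [nbrF] at hb
    rw [bitOf_flipBit_self v (by omega),
        bitOf_blockNbr_out v s' t' (by omega) (by omega)] at hb
    simp at hb
  · -- inr inl
    exfalso
    have hb := congrArg (fun w => bitOf w i') h
    simp only [nbrF] at hb
    rw [bitOf_flipBit_self v (by omega),
        bitOf_blockNbr_out v s t (by omega) (by omega)] at hb
    simp at hb
  · -- inr inr
    have hjn : 4*(j.1+1) + 1 < n := by have := j.2; omega
    have hjn' : 4*(j'.1+1) + 1 < n := by have := j'.2; omega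
    rcases eq_or_ne j.1 j'.1 with hjj | hjj
    · have hj : j = j' := Fin.ext hjj
      subst hj
      have hu := congrArg (fun w => pairVal w (4*(j.1+1))) h
      have hl := congrArg (fun w => pairVal w (4*(j.1+1)-2)) h
      simp only [nbrF] at hu hl
      rw [pairVal_blockNbr_up v s t (by omega) hjn,
          pairVal_blockNbr_up v s' t' (by omega) hjn] at hu
      rw [pairVal_blockNbr_low v s t (by omega) hjn,
          pairVal_blockNbr_low v s' t' (by omega) hjn] at hl
      have hu' := add_left_cancel hu
      have hl' := add_left_cancel hl
      have hs : s = s' := by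
        rcases s with _|_ <;> rcases s' with _|_
        · rfl
        · exact absurd hu' (by decide)
        · exact absurd hu' (by decide)
        · rfl
      have heps : eps v (j.1+1) ≠ 0 := by
        unfold eps; cases bitOf v (4*(j.1+1)) <;> decide
      have ht : t = t' := by
        rcases t with _|_ <;> rcases t' with _|_
        · rfl
        · exact absurd (by simpa using hl'.symm) heps
        · exact absurd (by simpa using hl') heps
        · rfl
      rw [hs, ht]
    · exfalso
      have hb := congrArg (fun w => bitOf w (4*(j.1+1))) h
      simp only [nbrF] at hb
      rw [bitOf_blockNbr_flip v s t (by omega) hjn,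
          bitOf_blockNbr_out v s' t' (by omega) (by omega)] at hb
      simp at hb

lemma neighborSet_eq (hn : n % 4 = 2) (v : Fin n → Bool) :
    (BSQ n).neighborSet v = Set.range (nbrF v) := by
  have h2 : 2 ≤ n := by omega
  ext u
  simp only [SimpleGraph.mem_neighborSet, BSQ, SimpleGraph.fromRel_adj, Set.mem_range]
  constructor
  · rintro ⟨hne, hrel⟩
    have hrel : bsqRel v u := hrel.elim id bsq_symm
    rcases hrel with ⟨i, hi, hneq, hall⟩ | ⟨j, hj1, hj2, hag, hup, hlow⟩
    · refine ⟨Sum.inl ⟨i, hi⟩, eq_of_bitOf_eq fun k => ?_⟩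
      show bitOf (flipBit v i) k = bitOf u k
      rcases eq_or_ne k i with rfl | hk
      · rw [bitOf_flipBit_self v (by omega)]
        revert hneq; cases bitOf v k <;> cases bitOf u k <;> simp
      · rw [bitOf_flipBit_ne v hk]; exact hall k hk
    · obtain ⟨s, hs⟩ : ∃ s : Bool, pairVal u (4*j) = pairVal v (4*j) + (if s then 1 else -1) := by
        rcases hup with h | h
        · exact ⟨true, by simpa using h⟩
        · exact ⟨false, by simpa [sub_eq_add_neg] using h⟩
      obtain ⟨t, ht⟩ : ∃ t : Bool,
          pairVal u (4*j-2) = pairVal v (4*j-2) + (if t then eps v j else 0) := by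
        rcases hlow with h | h
        · exact ⟨true, by simpa [eps] using h⟩
        · exact ⟨false, by simpa using h⟩
      refine ⟨Sum.inr ⟨⟨j-1, by omega⟩, s, t⟩, ?_⟩
      show blockNbr v (j-1+1) s t = u
      rw [show j-1+1 = j by omega]
      have hjn : 4*j + 1 < n := by omega
      refine eq_of_bitOf_eq fun k => ?_
      by_cases hk : k < 4*j - 2 ∨ 4*j + 1 < k
      · rw [bitOf_blockNbr_out v s t hj1 hk]; exact hag k hk
      · have hu : pairVal (blockNbr v j s t) (4*j) = pairVal u (4*j) := by
          rw [pairVal_blockNbr_up v s t hj1 hjn, hs]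
        have hl : pairVal (blockNbr v j s t) (4*j-2) = pairVal u (4*j-2) := by
          rw [pairVal_blockNbr_low v s t hj1 hjn, ht]
        obtain ⟨e1, e0⟩ := pairVal_inj hu
        obtain ⟨f1, f0⟩ := pairVal_inj hl
        have hk4 : k = 4*j-2 ∨ k = 4*j-2+1 ∨ k = 4*j ∨ k = 4*j+1 := by omega
        rcases hk4 with rfl | rfl | rfl | rfl <;> assumption
  · rintro ⟨x, rfl⟩
    rcases x with ⟨i, hi⟩ | ⟨j, s, t⟩
    · constructor
      · intro heq
        have hb := congrArg (fun w => bitOf w i) heq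
        simp only [nbrF] at hb
        rw [bitOf_flipBit_self v (by omega)] at hb
        simp at hb
      · exact Or.inl (bsq_flipBit v hi h2)
    · have hjn : 4*(j.1+1) + 1 < n := by have := j.2; omega
      constructor
      · intro heq
        have hb := congrArg (fun w => bitOf w (4*(j.1+1))) heq
        simp only [nbrF] at hb
        rw [bitOf_blockNbr_flip v s t (by omega) hjn] at hb
        simp at hb
      · exact Or.inl (bsq_blockNbr v s t (by omega) (by have := j.2; omega) hjn)

lemma card_nbr (hn : n % 4 = 2) (v : Fin n → Bool) :
    ((BSQ n).neighborSet v).ncard = n := by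
  rw [neighborSet_eq hn v, ← Nat.card_coe_set_eq,
      Nat.card_range_of_injective (nbrF_inj hn v)]
  simp only [Nat.card_eq_fintype_card, Fintype.card_sum, Fintype.card_prod,
    Fintype.card_fin, Fintype.card_bool]
  omega

def col (u : Fin n → Bool) : ZMod 2 :=
  ((bitOf u 0).toNat : ZMod 2) + ((bitOf u 1).toNat : ZMod 2) +
    ∑ j ∈ Finset.Icc 1 ((n-2)/4), ((bitOf u (4*j)).toNat : ZMod 2)

lemma toNat_flip {a b : Bool} (h : a ≠ b) : (a.toNat : ZMod 2) = (b.toNat : ZMod 2) + 1 := by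
  revert h; cases a <;> cases b <;> decide

lemma col_ne {u v : Fin n → Bool} (h : bsqRel u v) : col u ≠ col v := by
  have key : col v = col u + 1 := by
    rcases h with ⟨i, hi, hne, hall⟩ | ⟨j, hj1, hj2, hag, hup, hlow⟩
    · have hsum : ∑ j ∈ Finset.Icc 1 ((n-2)/4), ((bitOf v (4*j)).toNat : ZMod 2)
          = ∑ j ∈ Finset.Icc 1 ((n-2)/4), ((bitOf u (4*j)).toNat : ZMod 2) := by
        refine Finset.sum_congr rfl fun j hj => ?_
        have hj1 := (Finset.mem_Icc.mp hj).1
        rw [hall (4*j) (by omega)]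
      have hi01 : i = 0 ∨ i = 1 := by omega
      rcases hi01 with rfl | rfl
      · rw [col, col, hsum, toNat_flip hne.symm, hall 1 (by omega)]; ring
      · rw [col, col, hsum, toNat_flip hne.symm, hall 0 (by omega)]; ring
    · have hmem : j ∈ Finset.Icc 1 ((n-2)/4) := Finset.mem_Icc.mpr ⟨hj1, hj2⟩
      have hflip : bitOf v (4*j) = ! bitOf u (4*j) := bitOf_flip_of_pair hup
      have h0 : bitOf v 0 = bitOf u 0 := (hag 0 (by omega)).symm
      have h1 : bitOf v 1 = bitOf u 1 := (hag 1 (by omega)).symm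
      have hsum : ∀ w : Fin n → Bool,
          ∑ i ∈ Finset.Icc 1 ((n-2)/4), ((bitOf w (4*i)).toNat : ZMod 2)
          = ((bitOf w (4*j)).toNat : ZMod 2) +
            ∑ i ∈ (Finset.Icc 1 ((n-2)/4)).erase j, ((bitOf w (4*i)).toNat : ZMod 2) :=
        fun w => (Finset.add_sum_erase _ _ hmem).symm
      have herase : ∑ i ∈ (Finset.Icc 1 ((n-2)/4)).erase j, ((bitOf v (4*i)).toNat : ZMod 2)
          = ∑ i ∈ (Finset.Icc 1 ((n-2)/4)).erase j, ((bitOf u (4*i)).toNat : ZMod 2) := by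
        refine Finset.sum_congr rfl fun i hi => ?_
        have hie := Finset.mem_erase.mp hi
        have hii := Finset.mem_Icc.mp hie.2
        rw [← hag (4*i) (by rcases hie with ⟨hne', _⟩; omega)]
      rw [col, col, h0, h1, hsum v, hsum u, herase,
        toNat_flip (show bitOf v (4*j) ≠ bitOf u (4*j) by simp [hflip])]
      ring
  intro hE
  rw [key] at hE
  exact one_ne_zero (left_eq_add.mp hE)

end BSQaux

/-- For every `n ≡ 2 (mod 4)` (so `n ≥ 2`), the balanced shuffle-cube `BSQ_n`
is an `n`-regular bipartite graph with exactly `2^n` vertices. -/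
theorem BSQ_regular_bipartite_card (n : ℕ) (hn : n % 4 = 2) :
    (∀ v : Fin n → Bool, ((BSQ n).neighborSet v).ncard = n) ∧
      (BSQ n).Colorable 2 ∧ Nat.card (Fin n → Bool) = 2 ^ n := by
  refine ⟨fun v => BSQaux.card_nbr hn v, ?_, ?_⟩
  · have C : (BSQ n).Coloring (ZMod 2) := by
      refine SimpleGraph.Coloring.mk BSQaux.col fun {u v} hadj => ?_
      rw [BSQ, SimpleGraph.fromRel_adj] at hadj
      obtain ⟨_, h | h⟩ := hadj
      · exact BSQaux.col_ne h
      · exact (BSQaux.col_ne h).symm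
    have := C.colorable
    rwa [ZMod.card] at this
  · simp [Nat.card_eq_fintype_card]
end
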